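/- arXiv:1803.02919 — 4 statements merged into one kernel-verified Lean document; each statement's English description precedes it below -/
import Mathlib

section
/- Let (Ω, F, μ) be a complete σ-finite measure space, let H be a separable real Hilbert space, let C be a closed convex subset of H with 0 ∈ C, let β > 0, and let φ : ℝ → ℝ be even, convex, and differentiable with a β-Lipschitzian derivative. Suppose that μ(Ω) < +∞ or φ(0) = 0, and define h on the Bochner space L²((Ω,F,μ); H) by h(x) = ∫_Ω φ(d_C(x(ω))) μ(dω). Then h is a well-defined real-valued, convex, Fréchet differentiable function with a β-Lipschitzian gradient, and for every x ∈ L²((Ω,F,μ); H) and μ-almost every ω ∈ Ω, (∇h(x))(ω) = (φ'(d_C(x(ω)))/d_C(x(ω))) (x(ω) − proj_C x(ω)) if x(ω) ∉ C, and (∇h(x))(ω) = 0 if x(ω) ∈ C. -/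
/-!
Write `f v = φ (d_C v)` and `G v = (φ' (d_C v) / d_C v) • (v - P_C v)` on `H`. Since `φ` is even
and convex it is minimal at `0` and nondecreasing on `[0, ∞)`, and the variational inequality of
the projection makes `G v` a subgradient of `f` at `v`. The function `θ t = β t² / 2 - φ t` is
again even and convex (because `φ'` is `β`-Lipschitz), and the subgradient inequality of
`θ ∘ ‖· - P_C v‖` at `v`, together with `d_C u ≤ ‖u - P_C v‖`, is exactly the descent inequality
`f u ≤ f v + ⟪G v, u - v⟫ + β/2 ‖u - v‖²`. These two inequalities make `G` `β`-Lipschitz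
(Baillon–Haddad) and they integrate over `Ω`, so the same pair holds for `h` and `x ↦ G ∘ x`
on `L²`, which yields the convexity of `h`, its gradient, and the Lipschitz constant together.
-/

open MeasureTheory Metric Set Filter
open scoped RealInnerProductSpace

section Real

variable {ψ ψ' : ℝ → ℝ}

theorem ConvexOn.add_deriv_mul_sub_le (hconv : ConvexOn ℝ univ ψ)
    (hderiv : ∀ t, HasDerivAt ψ (ψ' t) t) (t s : ℝ) : ψ t + ψ' t * (s - t) ≤ ψ s := by
  rcases lt_trichotomy s t with hst | rfl | hst
  · have h := hconv.slope_le_of_hasDerivAt (mem_univ s) (mem_univ t) hst (hderiv t)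
    rw [slope_def_field, div_le_iff₀ (by linarith)] at h
    nlinarith
  · simp
  · have h := hconv.le_slope_of_hasDerivAt (mem_univ t) (mem_univ s) hst (hderiv t)
    rw [slope_def_field, le_div_iff₀ (by linarith)] at h
    nlinarith

theorem hasDerivAt_half_mul_sq_sub (β : ℝ) (hderiv : ∀ t, HasDerivAt ψ (ψ' t) t) (t : ℝ) :
    HasDerivAt (fun t => β / 2 * t ^ 2 - ψ t) (β * t - ψ' t) t :=
  (((hasDerivAt_pow 2 t).const_mul (β / 2)).sub (hderiv t)).congr_deriv (by push_cast; ring)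

theorem convexOn_half_mul_sq_sub {β : ℝ} (hβ : 0 ≤ β) (hderiv : ∀ t, HasDerivAt ψ (ψ' t) t)
    (hlip : LipschitzWith (Real.toNNReal β) ψ') :
    ConvexOn ℝ univ (fun t => β / 2 * t ^ 2 - ψ t) := by
  have hθ := hasDerivAt_half_mul_sq_sub β hderiv
  refine Monotone.convexOn_univ_of_deriv (fun t => (hθ t).differentiableAt) ?_
  rw [funext fun t => (hθ t).deriv]
  intro s t hst
  have hlip_ts := hlip.dist_le_mul t s
  rw [Real.dist_eq, Real.dist_eq, Real.coe_toNNReal β hβ, abs_of_nonneg (sub_nonneg.2 hst)]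
    at hlip_ts
  linarith [le_abs_self (ψ' t - ψ' s)]

namespace Function.Even

variable (heven : Function.Even ψ) (hconv : ConvexOn ℝ univ ψ)
include heven hconv

theorem apply_zero_le (s : ℝ) : ψ 0 ≤ ψ s := by
  have h := hconv.2 (mem_univ s) (mem_univ (-s)) (by norm_num : (0 : ℝ) ≤ 1 / 2)
    (by norm_num : (0 : ℝ) ≤ 1 / 2) (by norm_num)
  rw [smul_eq_mul, smul_eq_mul, smul_eq_mul, smul_eq_mul, heven s,
    show (1 / 2 : ℝ) * s + 1 / 2 * -s = 0 by ring] at h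
  linarith

variable (hderiv : ∀ t, HasDerivAt ψ (ψ' t) t)
include hderiv

theorem deriv_nonneg {t : ℝ} (ht : 0 ≤ t) : 0 ≤ ψ' t := by
  rcases ht.eq_or_lt with rfl | ht
  · have hmin : IsLocalMin ψ 0 := Eventually.of_forall (apply_zero_le heven hconv)
    exact (hmin.hasDerivAt_eq_zero (hderiv 0)).ge
  · nlinarith [hconv.add_deriv_mul_sub_le hderiv t 0, apply_zero_le heven hconv t]

theorem monotoneOn_Ici : MonotoneOn ψ (Ici 0) := fun s hs t _ hst => by
  nlinarith [hconv.add_deriv_mul_sub_le hderiv s t, deriv_nonneg heven hconv hderiv hs]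

theorem add_deriv_div_mul_le {t s x : ℝ} (ht : 0 ≤ t) (hx : x ≤ t * s) :
    ψ t + ψ' t / t * (x - t ^ 2) ≤ ψ s := by
  rcases ht.eq_or_lt with rfl | ht
  · simpa using apply_zero_le heven hconv s
  · have hslope : 0 ≤ ψ' t / t := div_nonneg (deriv_nonneg heven hconv hderiv ht.le) ht.le
    calc ψ t + ψ' t / t * (x - t ^ 2) ≤ ψ t + ψ' t / t * (t * s - t ^ 2) := by gcongr
      _ = ψ t + ψ' t * (s - t) := by field_simp
      _ ≤ ψ s := hconv.add_deriv_mul_sub_le hderiv t s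

end Function.Even

end Real

section FirstOrder

variable {E : Type*} [NormedAddCommGroup E] [InnerProductSpace ℝ E] {f : E → ℝ} {g : E → E}

theorem convexOn_univ_of_add_inner_le (h : ∀ x y, f x + ⟪g x, y - x⟫ ≤ f y) :
    ConvexOn ℝ univ f := by
  refine ⟨convex_univ, fun x _ y _ a b ha hb hab => ?_⟩
  set z := a • x + b • y
  have hcomb : a • (x - z) + b • (y - z) = 0 := by
    calc a • (x - z) + b • (y - z) = z - (a + b) • z := by simp only [z]; module
      _ = 0 := by rw [hab, one_smul, sub_self]
  have hinner : a * ⟪g z, x - z⟫ + b * ⟪g z, y - z⟫ = 0 := by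
    rw [← real_inner_smul_right, ← real_inner_smul_right, ← inner_add_right, hcomb,
      inner_zero_right]
  have hfz : f z = a * f z + b * f z := by rw [← add_mul, hab, one_mul]
  simp only [smul_eq_mul]
  nlinarith [mul_le_mul_of_nonneg_left (h z x) ha, mul_le_mul_of_nonneg_left (h z y) hb]

theorem hasGradientAt_of_add_inner_le_of_le_add_sq [CompleteSpace E] {g x : E} {K : ℝ}
    (hlow : ∀ y, f x + ⟪g, y - x⟫ ≤ f y)
    (hup : ∀ y, f y ≤ f x + ⟪g, y - x⟫ + K * ‖y - x‖ ^ 2) : HasGradientAt f g x := by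
  rw [hasGradientAt_iff_isLittleO_nhds_zero]
  refine Asymptotics.IsBigO.trans_isLittleO ?_ (Asymptotics.isLittleO_norm_pow_id one_lt_two)
  refine Asymptotics.IsBigO.of_bound |K| (Eventually.of_forall fun v => ?_)
  have hlow_v := hlow (x + v)
  have hup_v := hup (x + v)
  rw [add_sub_cancel_left] at hlow_v hup_v
  rw [Real.norm_eq_abs, norm_pow, norm_norm, abs_le]
  constructor <;> nlinarith [mul_le_mul_of_nonneg_right (le_abs_self K) (sq_nonneg ‖v‖),
    mul_nonneg (abs_nonneg K) (sq_nonneg ‖v‖)]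

variable {β : ℝ}

theorem norm_le_abs_add_mul_sq (hg0 : g 0 = 0) (hlow : ∀ x y, f x + ⟪g x, y - x⟫ ≤ f y)
    (hup : ∀ x y, f y ≤ f x + ⟪g x, y - x⟫ + β / 2 * ‖y - x‖ ^ 2) (v : E) :
    ‖f v‖ ≤ |f 0| + β / 2 * ‖v‖ ^ 2 := by
  have hlow_v := hlow 0 v
  have hup_v := hup 0 v
  simp only [hg0, inner_zero_left, add_zero, sub_zero] at hlow_v hup_v
  rw [Real.norm_eq_abs, abs_le]
  constructor <;> linarith [neg_abs_le (f 0), le_abs_self (f 0)]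

theorem add_inner_add_norm_sub_sq_le (hβ : 0 < β) (hlow : ∀ x y, f x + ⟪g x, y - x⟫ ≤ f y)
    (hup : ∀ x y, f y ≤ f x + ⟪g x, y - x⟫ + β / 2 * ‖y - x‖ ^ 2) (x y : E) :
    f x + ⟪g x, y - x⟫ + 1 / (2 * β) * ‖g y - g x‖ ^ 2 ≤ f y := by
  set D := g y - g x
  -- `z` minimises the quadratic upper bound for `f - ⟪g x, ·⟫` at `y`
  set z := y - (1 / β) • D
  have hup_z := hup y z
  have hlow_z := hlow x z
  have hzy : z - y = -((1 / β) • D) := by simp only [z]; abel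
  have hzx : z - x = (y - x) - (1 / β) • D := by simp only [z]; abel
  rw [hzy, inner_neg_right, real_inner_smul_right, norm_neg, norm_smul, Real.norm_eq_abs,
    abs_of_pos (one_div_pos.2 hβ), mul_pow] at hup_z
  rw [hzx, inner_sub_right, real_inner_smul_right] at hlow_z
  have hD : ⟪g y, D⟫ - ⟪g x, D⟫ = ‖D‖ ^ 2 := by
    rw [← inner_sub_left, real_inner_self_eq_norm_sq]
  have hβ2 : β / 2 * ((1 / β) ^ 2 * ‖D‖ ^ 2) = 1 / (2 * β) * ‖D‖ ^ 2 := by field_simp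
  have hβ1 : 1 / β * ⟪g y, D⟫ - 1 / β * ⟪g x, D⟫ = 2 * (1 / (2 * β) * ‖D‖ ^ 2) := by
    rw [← mul_sub, hD]; field_simp
  linarith

theorem lipschitzWith_of_add_inner_le_of_le_add_sq (hβ : 0 < β)
    (hlow : ∀ x y, f x + ⟪g x, y - x⟫ ≤ f y)
    (hup : ∀ x y, f y ≤ f x + ⟪g x, y - x⟫ + β / 2 * ‖y - x‖ ^ 2) :
    LipschitzWith (Real.toNNReal β) g := by
  refine LipschitzWith.of_dist_le_mul fun x y => ?_
  rw [dist_eq_norm, dist_eq_norm, Real.coe_toNNReal β hβ.le]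
  have hxy := add_inner_add_norm_sub_sq_le hβ hlow hup x y
  have hyx := add_inner_add_norm_sub_sq_le hβ hlow hup y x
  rw [norm_sub_rev] at hxy
  have hcocoercive : ‖g x - g y‖ ^ 2 ≤ β * ⟪g x - g y, x - y⟫ := by
    have hinner : ⟪g x - g y, x - y⟫ = -⟪g x, y - x⟫ - ⟪g y, x - y⟫ := by
      rw [inner_sub_left, ← inner_neg_right, neg_sub]
    have hsum : 1 / β * ‖g x - g y‖ ^ 2 ≤ ⟪g x - g y, x - y⟫ := by
      have : 1 / β = 2 * (1 / (2 * β)) := by field_simp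
      rw [this, hinner]; linarith
    rwa [one_div, inv_mul_le_iff₀ hβ] at hsum
  have hcs := real_inner_le_norm (g x - g y) (x - y)
  rcases (norm_nonneg (g x - g y)).eq_or_lt with h0 | hpos
  · rw [← h0]; positivity
  · nlinarith

end FirstOrder

section Projection

section Metric

variable {X : Type*} [MetricSpace X] {C : Set X} {projC : X → X}
  (hproj : ∀ x, projC x ∈ C ∧ ∀ y ∈ C, dist x (projC x) ≤ dist x y)
include hproj

theorem dist_proj_eq_infDist (v : X) : dist v (projC v) = infDist v C :=
  le_antisymm ((le_infDist ⟨_, (hproj v).1⟩).2 fun w hw => (hproj v).2 w hw)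
    (infDist_le_dist_of_mem (hproj v).1)

theorem proj_eq_self {v : X} (hv : v ∈ C) : projC v = v :=
  (dist_le_zero.1 (by simpa using (hproj v).2 v hv)).symm

end Metric

variable {H : Type*} [NormedAddCommGroup H] {C : Set H} {projC : H → H}
  (hproj : ∀ x, projC x ∈ C ∧ ∀ y ∈ C, dist x (projC x) ≤ dist x y)
include hproj

theorem norm_sub_proj_eq_infDist (v : H) : ‖v - projC v‖ = infDist v C := by
  rw [← dist_eq_norm, dist_proj_eq_infDist hproj]

variable [InnerProductSpace ℝ H]

theorem inner_sub_proj_le_zero (hCconv : Convex ℝ C) (v : H) {w : H} (hw : w ∈ C) :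
    ⟪v - projC v, w - projC v⟫ ≤ 0 := by
  refine (norm_eq_iInf_iff_real_inner_le_zero hCconv (hproj v).1).1 ?_ w hw
  rw [norm_sub_proj_eq_infDist hproj, infDist_eq_iInf]
  simp only [dist_eq_norm]

end Projection

section DistanceComposite

variable {H : Type*} [NormedAddCommGroup H] [InnerProductSpace ℝ H]

/-- The gradient of `v ↦ φ (d_C v)`; where `d_C v = 0`, Lean's `x / 0 = 0` makes it `0`. -/
noncomputable def gradCompInfDist (C : Set H) (projC : H → H) (φ' : ℝ → ℝ) (v : H) : H :=
  (φ' (infDist v C) / infDist v C) • (v - projC v)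

variable {C : Set H} {projC : H → H}
  (hproj : ∀ x, projC x ∈ C ∧ ∀ y ∈ C, dist x (projC x) ≤ dist x y)
  {φ φ' : ℝ → ℝ} (heven : Function.Even φ) (hconv : ConvexOn ℝ univ φ)
  (hderiv : ∀ t, HasDerivAt φ (φ' t) t)
include hproj

theorem gradCompInfDist_of_mem {v : H} (hv : v ∈ C) : gradCompInfDist C projC φ' v = 0 := by
  simp [gradCompInfDist, proj_eq_self hproj hv]

include heven hconv hderiv

theorem add_inner_gradCompInfDist_le (hCconv : Convex ℝ C) (v u : H) :
    φ (infDist v C) + ⟪gradCompInfDist C projC φ' v, u - v⟫ ≤ φ (infDist u C) := by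
  set a := v - projC v
  have hta : ‖a‖ = infDist v C := norm_sub_proj_eq_infDist hproj v
  have hkey : ⟪a, u - v⟫ + infDist v C ^ 2 ≤ infDist v C * infDist u C := by
    have hsplit : ⟪a, u - v⟫ = ⟪a, u - projC u⟫ + ⟪a, projC u - projC v⟫ - ‖a‖ ^ 2 := by
      rw [← real_inner_self_eq_norm_sq, ← inner_add_right, ← inner_sub_right]
      congr 1; simp only [a]; abel
    have hCS : ⟪a, u - projC u⟫ ≤ infDist v C * infDist u C := by
      simpa only [hta, norm_sub_proj_eq_infDist hproj u] using real_inner_le_norm a (u - projC u)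
    have hvar := inner_sub_proj_le_zero hproj hCconv v (hproj u).1
    rw [hsplit, hta]
    linarith
  have h := heven.add_deriv_div_mul_le hconv hderiv infDist_nonneg hkey
  rw [add_sub_cancel_right] at h
  rwa [gradCompInfDist, real_inner_smul_left]

theorem le_add_inner_gradCompInfDist_add_sq {β : ℝ} (hβ : 0 ≤ β)
    (hlip : LipschitzWith (Real.toNNReal β) φ') (v u : H) :
    φ (infDist u C) ≤
      φ (infDist v C) + ⟪gradCompInfDist C projC φ' v, u - v⟫ + β / 2 * ‖u - v‖ ^ 2 := by
  set a := v - projC v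
  set b := u - projC v
  set t := infDist v C
  have hta : ‖a‖ = t := norm_sub_proj_eq_infDist hproj v
  have hba : u - v = b - a := by simp only [a, b]; abel
  have hG : gradCompInfDist C projC φ' v = (φ' t / t) • a := rfl
  have hθeven : Function.Even fun t => β / 2 * t ^ 2 - φ t := fun t => by
    simp only [neg_sq, heven t]
  have hθ := hθeven.add_deriv_div_mul_le (convexOn_half_mul_sq_sub hβ hderiv hlip)
    (hasDerivAt_half_mul_sq_sub β hderiv) infDist_nonneg (hta ▸ real_inner_le_norm a b)
  have hθsplit : (β * t - φ' t) / t * (⟪a, b⟫ - t ^ 2) =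
      β * (⟪a, b⟫ - t ^ 2) - ⟪gradCompInfDist C projC φ' v, u - v⟫ := by
    rw [hG, real_inner_smul_left, hba, inner_sub_right a b a, real_inner_self_eq_norm_sq,
      hta]
    rcases eq_or_ne t 0 with h0 | h0
    · have ha : a = 0 := norm_eq_zero.1 (hta.trans h0)
      simp [ha, h0]
    · field_simp
  have hmono : φ (infDist u C) ≤ φ ‖b‖ :=
    heven.monotoneOn_Ici hconv hderiv infDist_nonneg (norm_nonneg b)
      (by rw [← dist_eq_norm]; exact infDist_le_dist_of_mem (hproj v).1)
  have hnorm : β / 2 * ‖u - v‖ ^ 2 = β / 2 * ‖b‖ ^ 2 - β * ⟪a, b⟫ + β / 2 * t ^ 2 := by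
    rw [hba, norm_sub_sq_real, hta, real_inner_comm]
    ring
  linarith

end DistanceComposite

section L2

variable {Ω : Type*} [MeasurableSpace Ω] {μ : Measure Ω} {E : Type*} [NormedAddCommGroup E]

theorem integrable_comp_of_norm_le_add_mul_sq {F : E → ℝ} (hF : Continuous F) {c K : ℝ}
    (hc : Integrable (fun _ => c) μ) (hbound : ∀ v, ‖F v‖ ≤ c + K * ‖v‖ ^ 2) (x : Lp E 2 μ) :
    Integrable (fun ω => F (x ω)) μ :=
  (hc.add ((Lp.memLp x).norm.integrable_sq.const_mul K)).mono'
    (hF.comp_aestronglyMeasurable (Lp.aestronglyMeasurable x))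
    (Eventually.of_forall fun ω => hbound (x ω))

variable [InnerProductSpace ℝ E]

theorem L2.norm_sq_eq_integral_norm_sq (x : Lp E 2 μ) : ‖x‖ ^ 2 = ∫ ω, ‖x ω‖ ^ 2 ∂μ := by
  rw [← real_inner_self_eq_norm_sq, L2.inner_def]
  simp only [real_inner_self_eq_norm_sq]

variable {F : E → ℝ} {G : E → E} {K : NNReal} (hG : LipschitzWith K G) (hG0 : G 0 = 0)
  (hint : ∀ x : Lp E 2 μ, Integrable (fun ω => F (x ω)) μ)
include hint

theorem integral_add_inner_compLp_le (hlow : ∀ v u, F v + ⟪G v, u - v⟫ ≤ F u)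
    (x y : Lp E 2 μ) :
    ∫ ω, F (x ω) ∂μ + ⟪hG.compLp hG0 x, y - x⟫ ≤ ∫ ω, F (y ω) ∂μ := by
  have hinner := L2.integrable_inner (𝕜 := ℝ) (hG.compLp hG0 x) (y - x)
  rw [L2.inner_def, ← integral_add (hint x) hinner]
  refine integral_mono_ae ((hint x).add hinner) (hint y) ?_
  filter_upwards [hG.coeFn_compLp hG0 x, Lp.coeFn_sub y x] with ω hgω hsub
  simpa only [Pi.add_apply, hgω, hsub, Pi.sub_apply, Function.comp_apply] using hlow (x ω) (y ω)

theorem integral_le_add_inner_compLp_add_sq {β : ℝ}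
    (hup : ∀ v u, F u ≤ F v + ⟪G v, u - v⟫ + β / 2 * ‖u - v‖ ^ 2) (x y : Lp E 2 μ) :
    ∫ ω, F (y ω) ∂μ ≤
      ∫ ω, F (x ω) ∂μ + ⟪hG.compLp hG0 x, y - x⟫ + β / 2 * ‖y - x‖ ^ 2 := by
  have hinner := L2.integrable_inner (𝕜 := ℝ) (hG.compLp hG0 x) (y - x)
  have hsq := (Lp.memLp (y - x)).norm.integrable_sq.const_mul (β / 2)
  have hlin : Integrable (fun ω => F (x ω) + ⟪hG.compLp hG0 x ω, (y - x) ω⟫) μ :=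
    (hint x).add hinner
  rw [L2.inner_def, L2.norm_sq_eq_integral_norm_sq, ← integral_const_mul,
    ← integral_add (hint x) hinner, ← integral_add hlin hsq]
  refine integral_mono_ae (hint y) (hlin.add hsq) ?_
  filter_upwards [hG.coeFn_compLp hG0 x, Lp.coeFn_sub y x] with ω hgω hsub
  simpa only [Pi.add_apply, hgω, hsub, Pi.sub_apply, Function.comp_apply] using hup (x ω) (y ω)

end L2

theorem stmt_13_general {Ω : Type*} [MeasurableSpace Ω] (μ : Measure Ω)
    {H : Type*} [NormedAddCommGroup H] [InnerProductSpace ℝ H] [CompleteSpace H]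
    (C : Set H) (hCconv : Convex ℝ C) (hC0 : (0 : H) ∈ C)
    (β : ℝ) (hβ : 0 < β)
    (φ : ℝ → ℝ) (heven : ∀ t, φ (-t) = φ t) (hconv : ConvexOn ℝ Set.univ φ)
    (φ' : ℝ → ℝ) (hderiv : ∀ t, HasDerivAt φ (φ' t) t)
    (hlip : LipschitzWith (Real.toNNReal β) φ')
    (hfin : μ Set.univ < ⊤ ∨ φ 0 = 0)
    (projC : H → H)
    (hproj : ∀ x, projC x ∈ C ∧ ∀ y ∈ C, dist x (projC x) ≤ dist x y)
    (h : Lp H 2 μ → ℝ)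
    (hdef : ∀ x : Lp H 2 μ, h x = ∫ ω, φ (Metric.infDist (x ω) C) ∂μ) :
    (∀ x : Lp H 2 μ, Integrable (fun ω => φ (Metric.infDist (x ω) C)) μ) ∧
    ConvexOn ℝ Set.univ h ∧
    ∃ g : Lp H 2 μ → Lp H 2 μ,
      (∀ x, HasGradientAt h (g x) x) ∧
      LipschitzWith (Real.toNNReal β) g ∧
      (∀ x : Lp H 2 μ, ∀ᵐ ω ∂μ,
        (x ω ∉ C → g x ω =
          (φ' (Metric.infDist (x ω) C) / Metric.infDist (x ω) C) • (x ω - projC (x ω))) ∧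
        (x ω ∈ C → g x ω = 0)) := by
  set f : H → ℝ := fun v => φ (infDist v C)
  set G := gradCompInfDist C projC φ'
  have hlow : ∀ v u, f v + ⟪G v, u - v⟫ ≤ f u :=
    add_inner_gradCompInfDist_le hproj heven hconv hderiv hCconv
  have hup : ∀ v u, f u ≤ f v + ⟪G v, u - v⟫ + β / 2 * ‖u - v‖ ^ 2 :=
    le_add_inner_gradCompInfDist_add_sq hproj heven hconv hderiv hβ.le hlip
  have hG0 : G 0 = 0 := gradCompInfDist_of_mem hproj hC0
  have hGlip : LipschitzWith (Real.toNNReal β) G :=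
    lipschitzWith_of_add_inner_le_of_le_add_sq hβ hlow hup
  have hf0 : f 0 = φ 0 := by simp only [f, infDist_zero_of_mem hC0]
  have hint : ∀ x : Lp H 2 μ, Integrable (fun ω => f (x ω)) μ := by
    refine integrable_comp_of_norm_le_add_mul_sq
      ((continuous_iff_continuousAt.2 fun t => (hderiv t).continuousAt).comp
        (continuous_infDist_pt C)) ?_ (norm_le_abs_add_mul_sq hG0 hlow hup)
    rw [hf0, integrable_const_iff]
    exact hfin.symm.imp abs_eq_zero.2 fun hμ => ⟨hμ⟩
  set g := hGlip.compLp hG0 (μ := μ) (p := 2)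
  have hlowL2 : ∀ x y, h x + ⟪g x, y - x⟫ ≤ h y := fun x y => by
    simpa only [hdef] using integral_add_inner_compLp_le hGlip hG0 hint hlow x y
  have hupL2 : ∀ x y, h y ≤ h x + ⟪g x, y - x⟫ + β / 2 * ‖y - x‖ ^ 2 := fun x y => by
    simpa only [hdef] using integral_le_add_inner_compLp_add_sq hGlip hG0 hint hup x y
  refine ⟨hint, convexOn_univ_of_add_inner_le hlowL2, g,
    fun x => hasGradientAt_of_add_inner_le_of_le_add_sq (hlowL2 x) (hupL2 x),
    hGlip.lipschitzWith_compLp hG0, fun x => ?_⟩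
  filter_upwards [hGlip.coeFn_compLp hG0 x] with ω hω
  exact ⟨fun _ => hω, fun hmem => hω.trans (gradCompInfDist_of_mem hproj hmem)⟩

/-- Let `(Ω, F, μ)` be a complete σ-finite measure space, `H` a
separable real Hilbert space, `C` a closed convex subset of `H` with `0 ∈ C`, `β > 0`,
and `φ : ℝ → ℝ` even convex differentiable with a `β`-Lipschitzian derivative.  Assume
`μ(Ω) < ∞` or `φ(0) = 0`, and set `h x = ∫ φ(d_C(x ω)) dμ(ω)` on `L²(Ω; H)`.  Then `h`
is well defined, real valued, convex, Fréchet differentiable with a `β`-Lipschitzian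
gradient, and for `μ`-a.e. `ω`, `(∇h(x))(ω) = (φ'(d_C(x ω))/d_C(x ω))(x ω − proj_C(x ω))`
if `x ω ∉ C` and `(∇h(x))(ω) = 0` if `x ω ∈ C`. -/
theorem stmt_13 {Ω : Type*} [MeasurableSpace Ω] (μ : Measure Ω)
    [μ.IsComplete] [SigmaFinite μ]
    {H : Type*} [NormedAddCommGroup H] [InnerProductSpace ℝ H] [CompleteSpace H]
    [SecondCountableTopology H]
    (C : Set H) (hCclosed : IsClosed C) (hCconv : Convex ℝ C) (hC0 : (0 : H) ∈ C)
    (β : ℝ) (hβ : 0 < β)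
    (φ : ℝ → ℝ) (heven : ∀ t, φ (-t) = φ t) (hconv : ConvexOn ℝ Set.univ φ)
    (φ' : ℝ → ℝ) (hderiv : ∀ t, HasDerivAt φ (φ' t) t)
    (hlip : LipschitzWith (Real.toNNReal β) φ')
    (hfin : μ Set.univ < ⊤ ∨ φ 0 = 0)
    (projC : H → H)
    (hproj : ∀ x, projC x ∈ C ∧ ∀ y ∈ C, dist x (projC x) ≤ dist x y)
    (h : Lp H 2 μ → ℝ)
    (hdef : ∀ x : Lp H 2 μ, h x = ∫ ω, φ (Metric.infDist (x ω) C) ∂μ) :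
    (∀ x : Lp H 2 μ, Integrable (fun ω => φ (Metric.infDist (x ω) C)) μ) ∧
    ConvexOn ℝ Set.univ h ∧
    ∃ g : Lp H 2 μ → Lp H 2 μ,
      (∀ x, HasGradientAt h (g x) x) ∧
      LipschitzWith (Real.toNNReal β) g ∧
      (∀ x : Lp H 2 μ, ∀ᵐ ω ∂μ,
        (x ω ∉ C → g x ω =
          (φ' (Metric.infDist (x ω) C) / Metric.infDist (x ω) C) • (x ω - projC (x ω))) ∧
        (x ω ∈ C → g x ω = 0)) :=
  stmt_13_general μ C hCconv hC0 β hβ φ heven hconv φ' hderiv hlip hfin projC hproj h hdef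
end

section
/- Let (Ω, F, μ) be a complete σ-finite measure space, let H be a separable real Hilbert space, let C be a closed convex subset of H with 0 ∈ C, let β > 0, and let φ : ℝ → ℝ be even, convex, and differentiable with a β-Lipschitzian derivative. Suppose that μ(Ω) < +∞ or φ(0) = 0, and define h on the Bochner space L²((Ω,F,μ); H) by h(x) = ∫_Ω φ(d_C(x(ω))) μ(dω). Let γ > 0 and x ∈ L²((Ω,F,μ); H). Then for μ-almost every ω ∈ Ω, (prox_{γh} x)(ω) = proj_C x(ω) + (prox_{γφ} d_C(x(ω)) / d_C(x(ω))) (x(ω) − proj_C x(ω)) if x(ω) ∉ C, and (prox_{γh} x)(ω) = x(ω) if x(ω) ∈ C. -/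
/-!
Minimizing `γ h(y) + ‖x - y‖² / 2` over `L²` amounts to minimizing the integrand
`γ φ(d_C w) + ‖x(ω) - w‖² / 2` pointwise in `w ∈ H`. As `d_C` is 1-Lipschitz, this integrand is
at least `γ φ(d_C w) + (d_C(x ω) - d_C w)² / 2 ≥ γ φ(π) + (d_C(x ω) - π)² / 2` with
`π = prox_{γφ}(d_C(x ω)) ∈ [0, d_C(x ω)]`, and the point of the segment `[proj_C(x ω), x ω]` at
distance `π` from `proj_C(x ω)` attains this bound. An even convex `φ` is nondecreasing on
`[0, ∞)`, so `φ ∘ d_C` is convex and the pointwise minimizer is unique; comparing the integrals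
of the two integrands then pins `prox_{γh} x` down almost everywhere. Integrability comes from
`|φ t - φ 0| ≤ β t²`, as `φ'(0) = 0` and `φ'` is `β`-Lipschitz.
-/

open MeasureTheory Metric Set

def IsNearestPointMap {X : Type*} [PseudoMetricSpace X] (C : Set X) (P : X → X) : Prop :=
  ∀ x, P x ∈ C ∧ ∀ y ∈ C, dist x (P x) ≤ dist x y

namespace IsNearestPointMap

section MetricSpace

variable {X : Type*} [MetricSpace X] {C : Set X} {P : X → X}

theorem dist_eq_infDist (hP : IsNearestPointMap C P) (x : X) : dist x (P x) = infDist x C :=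
  le_antisymm ((le_infDist ⟨P x, (hP x).1⟩).2 (hP x).2) (infDist_le_dist_of_mem (hP x).1)

theorem eq_self_of_mem (hP : IsNearestPointMap C P) {x : X} (hx : x ∈ C) : P x = x :=
  (dist_le_zero.1 (dist_self x ▸ (hP x).2 x hx)).symm

end MetricSpace

variable {E : Type*} [NormedAddCommGroup E] {C : Set E} {P : E → E}

theorem norm_sub_eq_infDist (hP : IsNearestPointMap C P) (x : E) : ‖x - P x‖ = infDist x C := by
  rw [← dist_eq_norm, hP.dist_eq_infDist]

variable [InnerProductSpace ℝ E]

theorem inner_sub_le_zero (hP : IsNearestPointMap C P) (hC : Convex ℝ C) (x : E) {c : E}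
    (hc : c ∈ C) : inner ℝ (x - P x) (c - P x) ≤ 0 := by
  refine (norm_eq_iInf_iff_real_inner_le_zero hC (hP x).1).1 ?_ c hc
  simp only [hP.norm_sub_eq_infDist, infDist_eq_iInf, dist_eq_norm]

theorem lipschitzWith_one (hP : IsNearestPointMap C P) (hC : Convex ℝ C) : LipschitzWith 1 P := by
  refine LipschitzWith.of_dist_le_mul fun a b => ?_
  rw [NNReal.coe_one, one_mul, dist_eq_norm, dist_eq_norm]
  have ha := hP.inner_sub_le_zero hC a (hP b).1
  have hb := hP.inner_sub_le_zero hC b (hP a).1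
  have hfirm : ‖P a - P b‖ ^ 2 ≤ inner ℝ (a - b) (P a - P b) := by
    have : inner ℝ (a - b) (P a - P b) - ‖P a - P b‖ ^ 2
        = -inner ℝ (a - P a) (P b - P a) - inner ℝ (b - P b) (P a - P b) := by
      rw [← real_inner_self_eq_norm_sq]
      simp only [inner_sub_left, inner_sub_right, real_inner_comm]
      ring
    linarith
  have hcs := real_inner_le_norm (a - b) (P a - P b)
  nlinarith [norm_nonneg (P a - P b), norm_nonneg (a - b)]

end IsNearestPointMap

theorem infDist_le_norm_of_zero_mem {E : Type*} [SeminormedAddCommGroup E] {C : Set E}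
    (hC0 : (0 : E) ∈ C) (v : E) : infDist v C ≤ ‖v‖ := by
  simpa using infDist_le_dist_of_mem (x := v) hC0

theorem Convex.convexOn_infDist {E : Type*} [SeminormedAddCommGroup E] [NormedSpace ℝ E]
    {C : Set E} (hC : Convex ℝ C) : ConvexOn ℝ univ (infDist · C) := by
  rcases C.eq_empty_or_nonempty with rfl | hne
  · simpa only [infDist_empty] using convexOn_const 0 convex_univ
  refine ⟨convex_univ, fun w _ z _ a b ha hb hab => ?_⟩
  refine le_of_forall_pos_le_add fun ε hε => ?_
  obtain ⟨c, hc, hwc⟩ := (infDist_lt_iff hne).1 (lt_add_of_pos_right (infDist w C) hε)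
  obtain ⟨c', hc', hzc'⟩ := (infDist_lt_iff hne).1 (lt_add_of_pos_right (infDist z C) hε)
  calc infDist (a • w + b • z) C ≤ dist (a • w + b • z) (a • c + b • c') :=
        infDist_le_dist_of_mem (hC hc hc' ha hb hab)
    _ ≤ a * dist w c + b * dist z c' := by
        refine (dist_add_add_le _ _ _ _).trans_eq ?_
        rw [dist_smul₀, dist_smul₀, Real.norm_of_nonneg ha, Real.norm_of_nonneg hb]
    _ ≤ a * (infDist w C + ε) + b * (infDist z C + ε) := by gcongr
    _ = a • infDist w C + b • infDist z C + ε := by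
        rw [smul_eq_mul, smul_eq_mul]; linear_combination ε * hab

theorem ConvexOn.comp_of_nonneg_of_monotoneOn {E : Type*} [AddCommGroup E] [Module ℝ E]
    {g : E → ℝ} {f : ℝ → ℝ} (hg : ConvexOn ℝ univ g) (hg0 : ∀ x, 0 ≤ g x)
    (hf : ConvexOn ℝ univ f) (hfmono : MonotoneOn f (Ici 0)) : ConvexOn ℝ univ (f ∘ g) := by
  refine ⟨convex_univ, fun x _ y _ a b ha hb hab => ?_⟩
  calc f (g (a • x + b • y)) ≤ f (a • g x + b • g y) :=
        hfmono (hg0 _) (add_nonneg (mul_nonneg ha (hg0 x)) (mul_nonneg hb (hg0 y)))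
          (hg.2 trivial trivial ha hb hab)
    _ ≤ a • f (g x) + b • f (g y) := hf.2 trivial trivial ha hb hab

theorem ConvexOn.monotoneOn_Ici_of_even {f : ℝ → ℝ} (hf : ConvexOn ℝ univ f)
    (heven : Function.Even f) : MonotoneOn f (Ici 0) := by
  intro a ha b _ hab
  have hmem : a ∈ segment ℝ (-b) b := by
    rw [segment_eq_Icc (by linarith [mem_Ici.1 ha])]
    exact ⟨by linarith [mem_Ici.1 ha], hab⟩
  simpa only [heven b, max_self] using hf.le_on_segment trivial trivial hmem

theorem ConvexOn.isMinOn_zero_of_even {f : ℝ → ℝ} (hf : ConvexOn ℝ univ f)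
    (heven : Function.Even f) : IsMinOn f univ 0 := by
  have hmono := hf.monotoneOn_Ici_of_even heven
  refine isMinOn_univ_iff.2 fun t => ?_
  rcases le_total 0 t with ht | ht
  · exact hmono (mem_Ici.2 le_rfl) ht ht
  · rw [← heven t]
    exact hmono (mem_Ici.2 le_rfl) (neg_nonneg.2 ht) (neg_nonneg.2 ht)

theorem abs_sub_le_mul_sq_of_lipschitzWith_deriv {f f' : ℝ → ℝ} {K : NNReal}
    (hf : ∀ t, HasDerivAt f (f' t) t) (hf' : LipschitzWith K f') (h0 : f' 0 = 0) (t : ℝ) :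
    |f t - f 0| ≤ K * t ^ 2 := by
  have hbound : ∀ s ∈ closedBall (0 : ℝ) |t|, ‖f' s‖ ≤ K * |t| := fun s hs => by
    simpa only [h0, dist_zero_right] using (hf'.dist_le_mul s 0).trans
      (mul_le_mul_of_nonneg_left (mem_closedBall.1 hs) K.coe_nonneg)
  have := (convex_closedBall (0 : ℝ) |t|).norm_image_sub_le_of_norm_hasDerivWithin_le
    (fun s _ => (hf s).hasDerivWithinAt) hbound (mem_closedBall_self (abs_nonneg t))
    (by rw [mem_closedBall, dist_zero_right, Real.norm_eq_abs])
  rwa [Real.norm_eq_abs, sub_zero, Real.norm_eq_abs, mul_assoc, abs_mul_abs_self, ← sq] at this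

theorem eq_of_add_half_sq_norm_sub_le {E : Type*} [NormedAddCommGroup E] [InnerProductSpace ℝ E]
    {F : E → ℝ} (hF : ConvexOn ℝ univ F) {v z w : E}
    (hz : ∀ y, F z + ‖v - z‖ ^ 2 / 2 ≤ F y + ‖v - y‖ ^ 2 / 2)
    (hw : F w + ‖v - w‖ ^ 2 / 2 ≤ F z + ‖v - z‖ ^ 2 / 2) : w = z := by
  -- the objective is `1`-strongly convex, so at the midpoint it drops by `‖w - z‖² / 8`
  set m : E := (1 / 2 : ℝ) • w + (1 / 2 : ℝ) • z
  have hFm : F m ≤ 1 / 2 * F w + 1 / 2 * F z :=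
    hF.2 trivial trivial (by norm_num) (by norm_num) (by norm_num)
  have hnorm : ‖v - m‖ ^ 2 = ‖v - w‖ ^ 2 / 2 + ‖v - z‖ ^ 2 / 2 - ‖w - z‖ ^ 2 / 4 := by
    have hpar := parallelogram_law_with_norm ℝ (v - w) (v - z)
    have hm : v - m = (1 / 2 : ℝ) • ((v - w) + (v - z)) := by module
    rw [hm, norm_smul, Real.norm_of_nonneg (by norm_num), ← norm_neg (w - z)]
    rw [show v - w - (v - z) = -(w - z) by abel] at hpar
    linear_combination hpar / 4
  have hle : ‖w - z‖ ^ 2 ≤ 0 := by linarith [hz m]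
  exact sub_eq_zero.1 (norm_eq_zero.1 (pow_eq_zero_iff two_ne_zero |>.1
    (le_antisymm hle (sq_nonneg _))))

def IsProxMap (f π : ℝ → ℝ) : Prop :=
  ∀ s t, f (π s) + (s - π s) ^ 2 / 2 ≤ f t + (s - t) ^ 2 / 2

namespace IsProxMap

variable {f π : ℝ → ℝ}

theorem monotone (hπ : IsProxMap f π) : Monotone π := by
  intro a b hab
  have ha := hπ a (π b)
  have hb := hπ b (π a)
  rcases hab.lt_or_eq with hab | rfl
  · nlinarith
  · rfl

theorem map_zero (hπ : IsProxMap f π) (hf : IsMinOn f univ 0) : π 0 = 0 := by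
  have h := hπ 0 0
  have hmin := isMinOn_univ_iff.1 hf (π 0)
  nlinarith

theorem nonneg (hπ : IsProxMap f π) (hf : IsMinOn f univ 0) {s : ℝ} (hs : 0 ≤ s) : 0 ≤ π s :=
  hπ.map_zero hf ▸ hπ.monotone hs

theorem le_self (hπ : IsProxMap f π) (hf : MonotoneOn f (Ici 0)) {s : ℝ} (hs : 0 ≤ s) :
    π s ≤ s := by
  by_contra! hlt
  have h := hπ s s
  have hfs := hf hs (hs.trans hlt.le) hlt.le
  nlinarith

end IsProxMap

section DistProx

variable {E : Type*} [NormedAddCommGroup E] [InnerProductSpace ℝ E]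

-- For `v ∈ C` the coefficient is `π 0 / 0 = 0`, so `distProx C P π v = P v = v`.
noncomputable def distProx (C : Set E) (P : E → E) (π : ℝ → ℝ) (v : E) : E :=
  P v + (π (infDist v C) / infDist v C) • (v - P v)

variable {C : Set E} {P : E → E} {π : ℝ → ℝ}

theorem distProx_of_mem (hP : IsNearestPointMap C P) {v : E} (hv : v ∈ C) :
    distProx C P π v = v := by
  simp [distProx, hP.eq_self_of_mem hv]

theorem map_div_mul_cancel (hπ : ∀ s, 0 ≤ s → 0 ≤ π s ∧ π s ≤ s) (s : ℝ) : π s / s * s = π s :=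
  div_mul_cancel_of_imp fun hs => by rw [hs]; exact le_antisymm (hπ 0 le_rfl).2 (hπ 0 le_rfl).1

theorem norm_distProx_sub (hP : IsNearestPointMap C P) (hπ : ∀ s, 0 ≤ s → 0 ≤ π s ∧ π s ≤ s)
    (v : E) : ‖distProx C P π v - P v‖ = π (infDist v C) := by
  have hd := infDist_nonneg (x := v) (s := C)
  rw [distProx, add_sub_cancel_left, norm_smul, hP.norm_sub_eq_infDist,
    Real.norm_of_nonneg (div_nonneg (hπ _ hd).1 hd), map_div_mul_cancel hπ]

theorem norm_sub_distProx (hP : IsNearestPointMap C P) (hπ : ∀ s, 0 ≤ s → 0 ≤ π s ∧ π s ≤ s)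
    (v : E) : ‖v - distProx C P π v‖ = infDist v C - π (infDist v C) := by
  have hd := infDist_nonneg (x := v) (s := C)
  have hsub : v - distProx C P π v = (1 - π (infDist v C) / infDist v C) • (v - P v) := by
    rw [distProx]; module
  rw [hsub, norm_smul, hP.norm_sub_eq_infDist,
    Real.norm_of_nonneg (sub_nonneg.2 (div_le_one_of_le₀ (hπ _ hd).2 hd)), sub_mul, one_mul,
    map_div_mul_cancel hπ]

theorem infDist_distProx (hP : IsNearestPointMap C P) (hπ : ∀ s, 0 ≤ s → 0 ≤ π s ∧ π s ≤ s)
    (v : E) : infDist (distProx C P π v) C = π (infDist v C) := by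
  refine le_antisymm ?_ ?_
  · calc infDist (distProx C P π v) C ≤ dist (distProx C P π v) (P v) :=
          infDist_le_dist_of_mem (hP v).1
      _ = π (infDist v C) := by rw [dist_eq_norm, norm_distProx_sub hP hπ]
  · have := infDist_le_infDist_add_dist (x := v) (y := distProx C P π v) (s := C)
    rw [dist_eq_norm, norm_sub_distProx hP hπ] at this
    linarith

theorem norm_distProx_le (hP : IsNearestPointMap C P) (hπ : ∀ s, 0 ≤ s → 0 ≤ π s ∧ π s ≤ s)
    (hC0 : (0 : E) ∈ C) (v : E) : ‖distProx C P π v‖ ≤ 2 * ‖v‖ := by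
  have := norm_sub_le v (v - distProx C P π v)
  rw [sub_sub_cancel, norm_sub_distProx hP hπ] at this
  linarith [(hπ _ (infDist_nonneg (x := v) (s := C))).1, infDist_le_norm_of_zero_mem hC0 v]

theorem add_half_sq_norm_sub_distProx_le (hP : IsNearestPointMap C P)
    (hπ : ∀ s, 0 ≤ s → 0 ≤ π s ∧ π s ≤ s) {f : ℝ → ℝ} (hf : IsProxMap f π) (v w : E) :
    f (infDist (distProx C P π v) C) + ‖v - distProx C P π v‖ ^ 2 / 2
      ≤ f (infDist w C) + ‖v - w‖ ^ 2 / 2 := by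
  have hlip : |infDist v C - infDist w C| ≤ ‖v - w‖ := by
    simpa [Real.dist_eq, dist_eq_norm] using (lipschitz_infDist_pt C).dist_le_mul v w
  have hsq : (infDist v C - infDist w C) ^ 2 ≤ ‖v - w‖ ^ 2 := by
    simpa only [sq_abs] using pow_le_pow_left₀ (abs_nonneg _) hlip 2
  rw [infDist_distProx hP hπ, norm_sub_distProx hP hπ]
  linarith [hf (infDist v C) (infDist w C)]

theorem eq_distProx_of_le (hP : IsNearestPointMap C P) (hC : Convex ℝ C)
    (hπ : ∀ s, 0 ≤ s → 0 ≤ π s ∧ π s ≤ s) {f : ℝ → ℝ} (hf : IsProxMap f π)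
    (hfconv : ConvexOn ℝ univ f) (hfmono : MonotoneOn f (Ici 0)) {v w : E}
    (hw : f (infDist w C) + ‖v - w‖ ^ 2 / 2
      ≤ f (infDist (distProx C P π v) C) + ‖v - distProx C P π v‖ ^ 2 / 2) :
    w = distProx C P π v :=
  eq_of_add_half_sq_norm_sub_le
    (hC.convexOn_infDist.comp_of_nonneg_of_monotoneOn (fun _ => infDist_nonneg) hfconv hfmono)
    (add_half_sq_norm_sub_distProx_le hP hπ hf v) hw

end DistProx

section Lp

variable {Ω : Type*} [MeasurableSpace Ω] {μ : Measure Ω}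
  {E : Type*} [NormedAddCommGroup E]

namespace MeasureTheory.Lp

theorem integrable_sq_norm_sub (x y : Lp E 2 μ) :
    Integrable (fun ω => ‖x ω - y ω‖ ^ 2) μ :=
  have hxy := (Lp.memLp x).sub (Lp.memLp y)
  (memLp_two_iff_integrable_sq_norm hxy.1).1 hxy

theorem integrable_comp_of_abs_sub_le {g : E → ℝ} (hg : Continuous g) {a K : ℝ}
    (hgrowth : ∀ v, |g v - a| ≤ K * ‖v‖ ^ 2) (ha : μ univ < ⊤ ∨ a = 0) (y : Lp E 2 μ) :
    Integrable (fun ω => g (y ω)) μ := by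
  have hy := (memLp_two_iff_integrable_sq_norm (Lp.aestronglyMeasurable y)).1 (Lp.memLp y)
  have hconst : Integrable (fun _ : Ω => |a|) μ := by
    rcases ha with hμ | rfl
    · have : IsFiniteMeasure μ := ⟨hμ⟩
      exact integrable_const _
    · simp only [abs_zero]
      exact integrable_zero Ω ℝ μ
  refine (hconst.add (hy.const_mul K)).mono'
    (hg.comp_aestronglyMeasurable (Lp.aestronglyMeasurable y)) (ae_of_all _ fun ω => ?_)
  rw [Real.norm_eq_abs, Pi.add_apply]
  linarith [abs_sub_abs_le_abs_sub (g (y ω)) a, hgrowth (y ω)]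

variable [InnerProductSpace ℝ E]

theorem sq_norm_sub_eq_integral (x y : Lp E 2 μ) :
    ‖x - y‖ ^ 2 = ∫ ω, ‖x ω - y ω‖ ^ 2 ∂μ := by
  rw [← real_inner_self_eq_norm_sq, L2.inner_def]
  refine integral_congr_ae ?_
  filter_upwards [Lp.coeFn_sub x y] with ω hω
  rw [hω, Pi.sub_apply, real_inner_self_eq_norm_sq]

theorem ae_eq_of_unique_pointwise_min {g : E → ℝ} {x p q : Lp E 2 μ}
    (hgp : Integrable (fun ω => g (p ω)) μ) (hgq : Integrable (fun ω => g (q ω)) μ)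
    (hq : ∀ᵐ ω ∂μ, ∀ w, g (q ω) + ‖x ω - q ω‖ ^ 2 / 2 ≤ g w + ‖x ω - w‖ ^ 2 / 2)
    (huniq : ∀ᵐ ω ∂μ, ∀ w,
      g w + ‖x ω - w‖ ^ 2 / 2 ≤ g (q ω) + ‖x ω - q ω‖ ^ 2 / 2 → w = q ω)
    (hp : (∫ ω, g (p ω) ∂μ) + ‖x - p‖ ^ 2 / 2 ≤ (∫ ω, g (q ω) ∂μ) + ‖x - q‖ ^ 2 / 2) :
    p =ᵐ[μ] q := by
  set G : Lp E 2 μ → Ω → ℝ := fun y ω => g (y ω) + ‖x ω - y ω‖ ^ 2 / 2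
  have hG : ∀ y : Lp E 2 μ, Integrable (fun ω => g (y ω)) μ →
      Integrable (G y) μ ∧ ∫ ω, G y ω ∂μ = (∫ ω, g (y ω) ∂μ) + ‖x - y‖ ^ 2 / 2 := fun y hy =>
    have hsq := (integrable_sq_norm_sub x y).div_const 2
    ⟨hy.add hsq, by rw [integral_add hy hsq, integral_div, sq_norm_sub_eq_integral]⟩
  have hle : G q ≤ᵐ[μ] G p := hq.mono fun ω h => h (p ω)
  have heq : G q =ᵐ[μ] G p := by
    refine (integral_eq_iff_of_ae_le (hG q hgq).1 (hG p hgp).1 hle).1 ?_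
    refine le_antisymm (integral_mono_ae (hG q hgq).1 (hG p hgp).1 hle) ?_
    rw [(hG p hgp).2, (hG q hgq).2]
    exact hp
  filter_upwards [heq, huniq] with ω hω hu
  exact hu (p ω) hω.ge

end MeasureTheory.Lp

variable [InnerProductSpace ℝ E]

theorem MeasureTheory.AEStronglyMeasurable.distProx {C : Set E} {P : E → E} {π : ℝ → ℝ}
    {x : Ω → E} (hx : AEStronglyMeasurable x μ) (hP : Continuous P) (hπ : Measurable π) :
    AEStronglyMeasurable (fun ω => distProx C P π (x ω)) μ := by
  have hPx := hP.comp_aestronglyMeasurable hx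
  have hd : AEMeasurable (fun ω => infDist (x ω) C) μ :=
    ((continuous_infDist_pt C).comp_aestronglyMeasurable hx).aemeasurable
  exact hPx.add (((hπ.comp_aemeasurable hd).div hd).aestronglyMeasurable.smul (hx.sub hPx))

theorem MeasureTheory.MemLp.distProx {C : Set E} {P : E → E} {π : ℝ → ℝ} {p : ENNReal}
    {x : Ω → E} (hx : MemLp x p μ) (hP : IsNearestPointMap C P) (hC : Convex ℝ C)
    (hC0 : (0 : E) ∈ C) (hπ : ∀ s, 0 ≤ s → 0 ≤ π s ∧ π s ≤ s) (hπm : Measurable π) :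
    MemLp (fun ω => distProx C P π (x ω)) p μ :=
  (hx.const_smul (2 : ℝ)).of_le
    (hx.1.distProx (hP.lipschitzWith_one hC).continuous hπm)
    (ae_of_all _ fun ω => (norm_distProx_le hP hπ hC0 (x ω)).trans_eq
      (by rw [Pi.smul_apply, norm_smul, Real.norm_two]))

end Lp

theorem stmt_14_general {Ω : Type*} [MeasurableSpace Ω] (μ : Measure Ω)
    {H : Type*} [NormedAddCommGroup H] [InnerProductSpace ℝ H]
    (C : Set H) (hCconv : Convex ℝ C) (hC0 : (0 : H) ∈ C)
    (β : ℝ)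
    (φ : ℝ → ℝ) (heven : ∀ t, φ (-t) = φ t) (hconv : ConvexOn ℝ Set.univ φ)
    (φ' : ℝ → ℝ) (hderiv : ∀ t, HasDerivAt φ (φ' t) t)
    (hlip : LipschitzWith (Real.toNNReal β) φ')
    (hfin : μ Set.univ < ⊤ ∨ φ 0 = 0)
    (projC : H → H)
    (hproj : ∀ x, projC x ∈ C ∧ ∀ y ∈ C, dist x (projC x) ≤ dist x y)
    (h : Lp H 2 μ → ℝ)
    (hdef : ∀ x : Lp H 2 μ, h x = ∫ ω, φ (Metric.infDist (x ω) C) ∂μ)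
    (γ : ℝ) (hγ : 0 < γ)
    -- `proxφ s = prox_{γφ} s` for every `s ∈ ℝ` :
    (proxφ : ℝ → ℝ)
    (hproxφ : ∀ s t : ℝ, γ * φ (proxφ s) + (s - proxφ s) ^ 2 / 2
      ≤ γ * φ t + (s - t) ^ 2 / 2)
    (x : Lp H 2 μ)
    -- `p = prox_{γh} x` :
    (p : Lp H 2 μ)
    (hp : ∀ y : Lp H 2 μ, γ * h p + ‖x - p‖ ^ 2 / 2 ≤ γ * h y + ‖x - y‖ ^ 2 / 2) :
    ∀ᵐ ω ∂μ,
      (x ω ∉ C → p ω = projC (x ω) +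
        (proxφ (Metric.infDist (x ω) C) / Metric.infDist (x ω) C) •
          (x ω - projC (x ω))) ∧
      (x ω ∈ C → p ω = x ω) := by
  set f : ℝ → ℝ := fun t => γ * φ t
  have hfconv : ConvexOn ℝ univ f := hconv.smul hγ.le
  have hfeven : Function.Even f := fun t => congrArg (γ * ·) (heven t)
  have hfmono := hfconv.monotoneOn_Ici_of_even hfeven
  have hprox : IsProxMap f proxφ := hproxφ
  have hπ : ∀ s, 0 ≤ s → 0 ≤ proxφ s ∧ proxφ s ≤ s := fun s hs =>
    ⟨hprox.nonneg (hfconv.isMinOn_zero_of_even hfeven) hs, hprox.le_self hfmono hs⟩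
  have hφ'0 : φ' 0 = 0 := ((hconv.isMinOn_zero_of_even heven).isLocalMin
    Filter.univ_mem).hasDerivAt_eq_zero (hderiv 0)
  have hint : ∀ y : Lp H 2 μ, Integrable (fun ω => f (infDist (y ω) C)) μ := fun y =>
    (Lp.integrable_comp_of_abs_sub_le ((Differentiable.continuous fun t =>
      (hderiv t).differentiableAt).comp (continuous_infDist_pt C))
      (fun v => (abs_sub_le_mul_sq_of_lipschitzWith_deriv hderiv hlip hφ'0 _).trans
        (by gcongr; exacts [infDist_nonneg, infDist_le_norm_of_zero_mem hC0 v])) hfin y).const_mul γ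
  have hTx := (Lp.memLp x).distProx hproj hCconv hC0 hπ hprox.monotone.measurable
  have hpT : p =ᵐ[μ] hTx.toLp := by
    refine Lp.ae_eq_of_unique_pointwise_min (g := fun v => f (infDist v C)) (x := x)
      (hint p) (hint _) ?_ ?_ ?_
    · filter_upwards [hTx.coeFn_toLp] with ω hω
      exact hω ▸ add_half_sq_norm_sub_distProx_le hproj hπ hprox _
    · filter_upwards [hTx.coeFn_toLp] with ω hω
      exact hω ▸ fun w => eq_distProx_of_le hproj hCconv hπ hprox hfconv hfmono
    · simpa only [f, hdef, integral_const_mul] using hp hTx.toLp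
  filter_upwards [hpT, hTx.coeFn_toLp] with ω hpω hqω
  rw [hpω, hqω]
  exact ⟨fun _ => rfl, distProx_of_mem hproj⟩

/-- In the setting of Statement 13 (`h x = ∫ φ(d_C(x ω)) dμ(ω)` on
`L²(Ω; H)`), for `γ > 0` and `x ∈ L²(Ω; H)`, the proximal point `p = prox_{γh} x`
satisfies, for `μ`-a.e. `ω`:
`p ω = proj_C (x ω) + (prox_{γφ}(d_C(x ω))/d_C(x ω)) (x ω − proj_C(x ω))` if `x ω ∉ C`,
and `p ω = x ω` if `x ω ∈ C`. -/
theorem stmt_14 {Ω : Type*} [MeasurableSpace Ω] (μ : Measure Ω)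
    [μ.IsComplete] [SigmaFinite μ]
    {H : Type*} [NormedAddCommGroup H] [InnerProductSpace ℝ H] [CompleteSpace H]
    [SecondCountableTopology H]
    (C : Set H) (hCclosed : IsClosed C) (hCconv : Convex ℝ C) (hC0 : (0 : H) ∈ C)
    (β : ℝ) (hβ : 0 < β)
    (φ : ℝ → ℝ) (heven : ∀ t, φ (-t) = φ t) (hconv : ConvexOn ℝ Set.univ φ)
    (φ' : ℝ → ℝ) (hderiv : ∀ t, HasDerivAt φ (φ' t) t)
    (hlip : LipschitzWith (Real.toNNReal β) φ')
    (hfin : μ Set.univ < ⊤ ∨ φ 0 = 0)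
    (projC : H → H)
    (hproj : ∀ x, projC x ∈ C ∧ ∀ y ∈ C, dist x (projC x) ≤ dist x y)
    (h : Lp H 2 μ → ℝ)
    (hdef : ∀ x : Lp H 2 μ, h x = ∫ ω, φ (Metric.infDist (x ω) C) ∂μ)
    (γ : ℝ) (hγ : 0 < γ)
    -- `proxφ s = prox_{γφ} s` for every `s ∈ ℝ` :
    (proxφ : ℝ → ℝ)
    (hproxφ : ∀ s t : ℝ, γ * φ (proxφ s) + (s - proxφ s) ^ 2 / 2
      ≤ γ * φ t + (s - t) ^ 2 / 2)
    (x : Lp H 2 μ)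
    -- `p = prox_{γh} x` :
    (p : Lp H 2 μ)
    (hp : ∀ y : Lp H 2 μ, γ * h p + ‖x - p‖ ^ 2 / 2 ≤ γ * h y + ‖x - y‖ ^ 2 / 2) :
    ∀ᵐ ω ∂μ,
      (x ω ∉ C → p ω = projC (x ω) +
        (proxφ (Metric.infDist (x ω) C) / Metric.infDist (x ω) C) •
          (x ω - projC (x ω))) ∧
      (x ω ∈ C → p ω = x ω) :=
  stmt_14_general μ C hCconv hC0 β φ heven hconv φ' hderiv hlip hfin projC hproj h hdef γ hγ proxφ
    hproxφ x p hp
end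

section
/- Let H be a separable real Hilbert space, let K be a nonempty subset of ℕ, and let (e_k)_{k∈K} be an orthonormal basis of H. For every k ∈ K, let β_k > 0 and let φ_k : ℝ → ℝ be a differentiable convex function such that φ_k ≥ φ_k(0) = 0 and φ_k' is β_k-Lipschitzian. Suppose that β = sup_{k∈K} β_k < +∞ and define h(x) = Σ_{k∈K} φ_k(⟨x, e_k⟩) for every x ∈ H. Then h is a well-defined real-valued, convex, Fréchet differentiable function with a β-Lipschitzian gradient, and for every x ∈ H, ∇h(x) = Σ_{k∈K} φ_k'(⟨x, e_k⟩) e_k. -/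
/-!
Each `φ k` satisfies the second-order estimate `|φ b - φ a - φ' a * (b - a)| ≤ β * (b - a) ^ 2`
(mean value theorem applied to `t ↦ φ t - φ' a * t`), and `φ k 0 = φ' k 0 = 0` because `0` is a
minimum of `φ k`. Summed against Parseval's identity `∑ ⟪x, e k⟫ ^ 2 = ‖x‖ ^ 2`, these
coordinatewise estimates give the summability of `h`, the square-summability of the gradient
coefficients `φ' k ⟪x, e k⟫`, the bound `|h y - h x - ⟪∇h x, y - x⟫| ≤ β * ‖y - x‖ ^ 2` (hence
differentiability), and the `β`-Lipschitz continuity of `∇h`. Convexity passes from the summands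
to the sum.
-/

open scoped NNReal InnerProductSpace

theorem abs_sub_sub_mul_le_of_lipschitzWith_deriv {f f' : ℝ → ℝ} {L : ℝ≥0}
    (hf : ∀ t, HasDerivAt f (f' t) t) (hf' : LipschitzWith L f') (a b : ℝ) :
    |f b - f a - f' a * (b - a)| ≤ L * (b - a) ^ 2 := by
  have hderiv : ∀ t, HasDerivAt (fun s => f s - f' a * s) (f' t - f' a) t := fun t => by
    have := (hf t).sub ((hasDerivAt_id t).const_mul (f' a))
    rwa [mul_one] at this
  have hbound : ∀ t ∈ Set.uIcc a b, ‖f' t - f' a‖ ≤ L * |b - a| := fun t ht =>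
    calc ‖f' t - f' a‖ ≤ L * |t - a| := hf'.dist_le_mul t a
      _ ≤ L * |b - a| := mul_le_mul_of_nonneg_left (Set.abs_sub_left_of_mem_uIcc ht) L.2
  have := (convex_uIcc a b).norm_image_sub_le_of_norm_hasDerivWithin_le
    (fun t _ => (hderiv t).hasDerivWithinAt) hbound Set.left_mem_uIcc Set.right_mem_uIcc
  calc |f b - f a - f' a * (b - a)| = ‖(f b - f' a * b) - (f a - f' a * a)‖ := by
        rw [Real.norm_eq_abs]; ring_nf
    _ ≤ L * |b - a| * ‖b - a‖ := this
    _ = L * (b - a) ^ 2 := by rw [Real.norm_eq_abs, mul_assoc, abs_mul_abs_self, sq]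

theorem convexOn_tsum {ι E : Type*} [AddCommMonoid E] [Module ℝ E] {s : Set E}
    {F : ι → E → ℝ} (hs : Convex ℝ s) (hF : ∀ i, ConvexOn ℝ s (F i))
    (hsum : ∀ x ∈ s, Summable fun i => F i x) : ConvexOn ℝ s fun x => ∑' i, F i x := by
  refine ⟨hs, fun x hx y hy a c ha hc hac => ?_⟩
  have hxa := (hsum x hx).mul_left a
  have hyc := (hsum y hy).mul_left c
  calc ∑' i, F i (a • x + c • y) ≤ ∑' i, (a * F i x + c * F i y) :=
        (hsum _ (hs hx hy ha hc hac)).tsum_le_tsum (fun i => (hF i).2 hx hy ha hc hac)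
          (hxa.add hyc)
    _ = a • ∑' i, F i x + c • ∑' i, F i y := by
        rw [hxa.tsum_add hyc, tsum_mul_left, tsum_mul_left, smul_eq_mul, smul_eq_mul]

theorem hasGradientAt_of_abs_sub_sub_inner_le {H : Type*} [NormedAddCommGroup H]
    [InnerProductSpace ℝ H] [CompleteSpace H] {F : H → ℝ} {G x : H} {C : ℝ}
    (h : ∀ y, |F y - F x - ⟪G, y - x⟫_ℝ| ≤ C * ‖y - x‖ ^ 2) : HasGradientAt F G x := by
  rw [hasGradientAt_iff_isLittleO_nhds_zero]
  refine (Asymptotics.IsBigO.of_bound C (Filter.Eventually.of_forall fun v => ?_)).trans_isLittleO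
    (Asymptotics.isLittleO_norm_pow_id one_lt_two)
  simpa [abs_of_nonneg] using h (x + v)

namespace HilbertBasis

variable {ι H : Type*} [NormedAddCommGroup H] [InnerProductSpace ℝ H] (b : HilbertBasis ι ℝ H)

theorem hasSum_inner_sq (x : H) : HasSum (fun i => ⟪x, b i⟫_ℝ ^ 2) (‖x‖ ^ 2) := by
  simpa [← real_inner_self_eq_norm_sq, real_inner_comm x, sq] using b.hasSum_inner_mul_inner x x

theorem abs_tsum_le_of_abs_le_mul_inner_sq {c : ι → ℝ} {C : ℝ} {x : H}
    (h : ∀ i, |c i| ≤ C * ⟪x, b i⟫_ℝ ^ 2) : |∑' i, c i| ≤ C * ‖x‖ ^ 2 := by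
  simpa only [Real.norm_eq_abs] using
    tsum_of_norm_bounded (f := c) ((b.hasSum_inner_sq x).mul_left C) h

theorem summable_of_abs_le_mul_inner_sq {c : ι → ℝ} {C : ℝ} {x : H}
    (h : ∀ i, |c i| ≤ C * ⟪x, b i⟫_ℝ ^ 2) : Summable c :=
  .of_norm_bounded ((b.hasSum_inner_sq x).summable.mul_left C) h

theorem memℓp_of_abs_le_mul_abs_inner {c : ι → ℝ} {C : ℝ} {x : H}
    (h : ∀ i, |c i| ≤ C * |⟪x, b i⟫_ℝ|) : Memℓp c 2 :=
  ((lp.memℓp (b.repr x)).const_smul C).mono' fun i => by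
    simpa [b.repr_apply_apply, real_inner_comm] using (h i).trans (by gcongr; exact le_abs_self C)

theorem inner_tsum_smul {c : ι → ℝ} (hc : Memℓp c 2) (j : ι) :
    ⟪∑' i, c i • b i, b j⟫_ℝ = c j := by
  rw [(b.hasSum_repr_symm ⟨c, hc⟩).tsum_eq, real_inner_comm, ← b.repr_apply_apply,
    LinearIsometryEquiv.apply_symm_apply]

theorem norm_le_of_abs_inner_le {x y : H} {C : ℝ} (hC : 0 ≤ C)
    (h : ∀ i, |⟪x, b i⟫_ℝ| ≤ C * |⟪y, b i⟫_ℝ|) : ‖x‖ ≤ C * ‖y‖ := by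
  rw [← b.repr.norm_map x, ← b.repr.norm_map y, ← abs_of_nonneg hC, ← Real.norm_eq_abs,
    ← norm_smul]
  refine lp.norm_mono two_ne_zero fun i => ?_
  simpa [b.repr_apply_apply, real_inner_comm, abs_of_nonneg hC] using h i

variable {f g : ι → ℝ → ℝ} {L : ℝ≥0}

theorem summable_comp_inner (hf : ∀ i t, HasDerivAt (f i) (g i t) t)
    (hg : ∀ i, LipschitzWith L (g i)) (hf0 : ∀ i, f i 0 = 0) (hg0 : ∀ i, g i 0 = 0) (x : H) :
    Summable fun i => f i ⟪x, b i⟫_ℝ :=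
  b.summable_of_abs_le_mul_inner_sq fun i => by
    simpa [hf0, hg0] using abs_sub_sub_mul_le_of_lipschitzWith_deriv (hf i) (hg i) 0 ⟪x, b i⟫_ℝ

theorem memℓp_comp_inner (hg : ∀ i, LipschitzWith L (g i)) (hg0 : ∀ i, g i 0 = 0) (x : H) :
    Memℓp (fun i => g i ⟪x, b i⟫_ℝ) 2 :=
  b.memℓp_of_abs_le_mul_abs_inner fun i => by
    simpa [hg0, Real.dist_eq] using (hg i).dist_le_mul ⟪x, b i⟫_ℝ 0

theorem lipschitzWith_tsum_comp_inner_smul (hg : ∀ i, LipschitzWith L (g i))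
    (hg0 : ∀ i, g i 0 = 0) : LipschitzWith L fun x : H => ∑' i, g i ⟪x, b i⟫_ℝ • b i := by
  refine .of_dist_le_mul fun x y => ?_
  rw [dist_eq_norm, dist_eq_norm]
  refine b.norm_le_of_abs_inner_le L.2 fun i => ?_
  rw [inner_sub_left, inner_sub_left, b.inner_tsum_smul (b.memℓp_comp_inner hg hg0 x),
    b.inner_tsum_smul (b.memℓp_comp_inner hg hg0 y), ← Real.dist_eq, ← Real.dist_eq]
  exact (hg i).dist_le_mul _ _

theorem abs_tsum_sub_sub_inner_le (hf : ∀ i t, HasDerivAt (f i) (g i t) t)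
    (hg : ∀ i, LipschitzWith L (g i)) (hf0 : ∀ i, f i 0 = 0) (hg0 : ∀ i, g i 0 = 0) (x y : H) :
    |∑' i, f i ⟪y, b i⟫_ℝ - ∑' i, f i ⟪x, b i⟫_ℝ - ⟪∑' i, g i ⟪x, b i⟫_ℝ • b i, y - x⟫_ℝ|
      ≤ L * ‖y - x‖ ^ 2 := by
  have hgrad : HasSum (fun i => g i ⟪x, b i⟫_ℝ * ⟪y - x, b i⟫_ℝ)
      ⟪∑' i, g i ⟪x, b i⟫_ℝ • b i, y - x⟫_ℝ := by
    simpa [b.inner_tsum_smul (b.memℓp_comp_inner hg hg0 x), real_inner_comm (y - x)]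
      using b.hasSum_inner_mul_inner (∑' i, g i ⟪x, b i⟫_ℝ • b i) (y - x)
  rw [← (((b.summable_comp_inner hf hg hf0 hg0 y).hasSum.sub
    (b.summable_comp_inner hf hg hf0 hg0 x).hasSum).sub hgrad).tsum_eq]
  refine b.abs_tsum_le_of_abs_le_mul_inner_sq fun i => ?_
  simpa only [inner_sub_left] using
    abs_sub_sub_mul_le_of_lipschitzWith_deriv (hf i) (hg i) ⟪x, b i⟫_ℝ ⟪y, b i⟫_ℝ

end HilbertBasis

theorem stmt_15_general {H : Type*} [NormedAddCommGroup H] [InnerProductSpace ℝ H] [CompleteSpace H]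
    (K : Set ℕ)
    (e : HilbertBasis K ℝ H)
    (βk : K → ℝ) (hbdd : BddAbove (Set.range βk))
    (φ : K → ℝ → ℝ) (hconv : ∀ k, ConvexOn ℝ Set.univ (φ k))
    (hφ0 : ∀ k, φ k 0 = 0) (hφnn : ∀ k t, φ k 0 ≤ φ k t)
    (φ' : K → ℝ → ℝ) (hderiv : ∀ k t, HasDerivAt (φ k) (φ' k t) t)
    (hlip : ∀ k, LipschitzWith (Real.toNNReal (βk k)) (φ' k))
    (h : H → ℝ)
    (hdef : ∀ x, h x = ∑' k : K, φ k (inner ℝ x (e k))) :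
    (∀ x : H, Summable (fun k : K => φ k (inner ℝ x (e k)))) ∧
    ConvexOn ℝ Set.univ h ∧
    (∀ x : H, HasGradientAt h (∑' k : K, φ' k (inner ℝ x (e k)) • e k) x) ∧
    LipschitzWith (Real.toNNReal (⨆ k : K, βk k))
      (fun x => ∑' k : K, φ' k (inner ℝ x (e k)) • e k) := by
  have hlipβ : ∀ k, LipschitzWith (Real.toNNReal (⨆ k : K, βk k)) (φ' k) := fun k =>
    (hlip k).weaken (Real.toNNReal_le_toNNReal (le_ciSup hbdd k))
  have hφ'0 : ∀ k, φ' k 0 = 0 := fun k =>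
    IsLocalMin.hasDerivAt_eq_zero (.of_forall (hφnn k)) (hderiv k 0)
  have hsum := e.summable_comp_inner hderiv hlipβ hφ0 hφ'0
  obtain rfl : h = fun x => ∑' k : K, φ k ⟪x, e k⟫_ℝ := funext hdef
  refine ⟨hsum, ?_, fun x => ?_, e.lipschitzWith_tsum_comp_inner_smul hlipβ hφ'0⟩
  · refine convexOn_tsum convex_univ (fun k => ?_) fun x _ => hsum x
    simpa [Function.comp_def, real_inner_comm] using (hconv k).comp_linearMap (innerₛₗ ℝ (e k))
  · exact hasGradientAt_of_abs_sub_sub_inner_le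
      (e.abs_tsum_sub_sub_inner_le hderiv hlipβ hφ0 hφ'0 x)

/-- Let `H` be a separable real Hilbert space, `K` a nonempty subset of
`ℕ`, and `(e k)_{k ∈ K}` an orthonormal basis of `H`.  For each `k`, let `βk k > 0` and
`φ k : ℝ → ℝ` differentiable convex with `φ k ≥ φ k 0 = 0` and a `βk k`-Lipschitzian
derivative.  Assume `β = sup_k βk k < ∞` and set `h x = ∑_{k ∈ K} φ k ⟨x, e k⟩`.  Then
`h` is well defined, real valued, convex, Fréchet differentiable with a `β`-Lipschitzian
gradient, and `∇h(x) = ∑_{k ∈ K} φ' k ⟨x, e k⟩ • e k`. -/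
theorem stmt_15 {H : Type*} [NormedAddCommGroup H] [InnerProductSpace ℝ H] [CompleteSpace H]
    (K : Set ℕ) (hK : K.Nonempty)
    (e : HilbertBasis K ℝ H)
    (βk : K → ℝ) (hβk : ∀ k, 0 < βk k) (hbdd : BddAbove (Set.range βk))
    (φ : K → ℝ → ℝ) (hconv : ∀ k, ConvexOn ℝ Set.univ (φ k))
    (hφ0 : ∀ k, φ k 0 = 0) (hφnn : ∀ k t, φ k 0 ≤ φ k t)
    (φ' : K → ℝ → ℝ) (hderiv : ∀ k t, HasDerivAt (φ k) (φ' k t) t)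
    (hlip : ∀ k, LipschitzWith (Real.toNNReal (βk k)) (φ' k))
    (h : H → ℝ)
    (hdef : ∀ x, h x = ∑' k : K, φ k (inner ℝ x (e k))) :
    (∀ x : H, Summable (fun k : K => φ k (inner ℝ x (e k)))) ∧
    ConvexOn ℝ Set.univ h ∧
    (∀ x : H, HasGradientAt h (∑' k : K, φ' k (inner ℝ x (e k)) • e k) x) ∧
    LipschitzWith (Real.toNNReal (⨆ k : K, βk k))
      (fun x => ∑' k : K, φ' k (inner ℝ x (e k)) • e k) :=
  stmt_15_general K e βk hbdd φ hconv hφ0 hφnn φ' hderiv hlip h hdef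
end

section
/- Let H be a real Hilbert space, let φ : H → (−∞, +∞] be a proper lower semicontinuous convex function, let β > 0, and define h = β q − (β q) □ φ, where q = ‖·‖²/2 and □ denotes infimal convolution. Then h : H → ℝ is convex and Fréchet differentiable with a β-Lipschitzian gradient; for every x ∈ H, ∇h(x) = β prox_{φ/β} x; and for every γ > 0 and every x ∈ H, prox_{γh} x = x − βγ prox_{φ/(β(1+βγ))}( x/(1+βγ) ). -/
/-!
The function `h` is the supremum over `y` of the affine functions
`z ↦ β ⟪z, y⟫ - β q y - φ y`, and at `z` the supremum is attained at `y = prox_{φ/β} z`; hence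
`β prox_{φ/β}` is a subgradient field of `h`, and `h` is convex. Proximity operators of convex
functions are firmly nonexpansive, so this field is `β`-Lipschitz; this traps `h` between its
linearization and a quadratic, which gives Fréchet differentiability with gradient `β prox_{φ/β}`.

For `p = prox_{γh} x` the optimality condition reads `x = p + γβ prox_{φ/β} p`. Rescaling the
variational inequality characterizing `w = prox_{φ/(β(1+βγ))}(x/(1+βγ))` shows that
`p₀ = x - βγ w` satisfies `prox_{φ/β} p₀ = w`, hence the same equation, and
`p ↦ p + γβ prox_{φ/β} p` is injective because `prox_{φ/β}` is monotone.
-/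

open Asymptotics Filter Set Topology
open scoped InnerProductSpace

theorem le_of_forall_pos_le_add_mul {a b C : ℝ} (hC : 0 ≤ C)
    (h : ∀ t : ℝ, 0 < t → t ≤ 1 → a ≤ b + t * C) : a ≤ b := by
  refine le_of_forall_pos_le_add fun ε hε => ?_
  set t := min 1 (ε / (C + 1))
  have ht : 0 < t := lt_min one_pos (by positivity)
  have htC : t * C ≤ ε :=
    calc t * C ≤ ε / (C + 1) * C := mul_le_mul_of_nonneg_right (min_le_right _ _) hC
      _ ≤ ε := by rw [div_mul_eq_mul_div, div_le_iff₀ (by linarith)]; nlinarith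
  linarith [h t ht (min_le_left _ _)]

section Subgradient
variable {H : Type*} [NormedAddCommGroup H] [InnerProductSpace ℝ H]

theorem convexOn_univ_of_le_add_inner {f : H → ℝ} (g : H → H)
    (hg : ∀ x z, f x + ⟪g x, z - x⟫_ℝ ≤ f z) : ConvexOn ℝ univ f := by
  refine ⟨convex_univ, fun x _ y _ a b ha hb hab => ?_⟩
  set p := a • x + b • y
  have hbal : a * ⟪g p, x - p⟫_ℝ + b * ⟪g p, y - p⟫_ℝ = 0 := by
    have : a • (x - p) + b • (y - p) = 0 := by
      rw [smul_sub, smul_sub, sub_add_sub_comm, ← add_smul, hab, one_smul, sub_self]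
    simpa only [inner_add_right, real_inner_smul_right, inner_zero_right] using
      congrArg (inner ℝ (g p)) this
  have hx := mul_le_mul_of_nonneg_left (hg p x) ha
  have hy := mul_le_mul_of_nonneg_left (hg p y) hb
  have hfp : f p = a * f p + b * f p := by rw [← add_mul, hab, one_mul]
  simp only [smul_eq_mul]
  linarith

theorem hasGradientAt_of_le_add_inner [CompleteSpace H] {f : H → ℝ} {g : H → H} {K : NNReal}
    (hg : ∀ x z, f x + ⟪g x, z - x⟫_ℝ ≤ f z) (hK : LipschitzWith K g) (x : H) :
    HasGradientAt f (g x) x := by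
  have hup : ∀ z, f z - f x - ⟪g x, z - x⟫_ℝ ≤ K * ‖z - x‖ ^ 2 := fun z => by
    have hzx := hg z x
    have hcs := real_inner_le_norm (g z - g x) (z - x)
    have hlip : ‖g z - g x‖ ≤ K * ‖z - x‖ := by simpa [dist_eq_norm] using hK.dist_le_mul z x
    rw [← neg_sub z x, inner_neg_right] at hzx
    rw [inner_sub_left] at hcs
    nlinarith [mul_le_mul_of_nonneg_right hlip (norm_nonneg (z - x))]
  have hsq : (fun z => ‖z - x‖ * ‖z - x‖) =o[𝓝 x] fun z => z - x := by
    have h0 : (fun z => ‖z - x‖) =o[𝓝 x] fun _ => (1 : ℝ) :=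
      (isLittleO_one_iff ℝ).mpr (tendsto_norm_sub_self x)
    simpa [isLittleO_norm_right] using h0.mul_isBigO (isBigO_refl (fun z => ‖z - x‖) _)
  rw [hasGradientAt_iff_isLittleO]
  refine IsBigO.trans_isLittleO (IsBigO.of_bound K (Eventually.of_forall fun z => ?_)) hsq
  rw [Real.norm_eq_abs, Real.norm_eq_abs, abs_le, abs_mul, abs_norm, ← sq]
  constructor <;> nlinarith [hg x z, hup z, K.coe_nonneg, sq_nonneg ‖z - x‖]

theorem sub_eq_smul_of_forall_le_add_sq [CompleteSpace H] {f : H → ℝ} {g x p : H} {γ : ℝ}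
    (hf : HasGradientAt f g p)
    (hmin : ∀ y, γ * f p + ‖x - p‖ ^ 2 / 2 ≤ γ * f y + ‖x - y‖ ^ 2 / 2) : x - p = γ • g := by
  have hd := ((hasGradientAt_iff_hasFDerivAt.mp hf).const_mul γ).add
    ((((hasFDerivAt_id p).const_sub x).norm_sq).mul_const (1 / 2))
  simp only [id, ← div_eq_mul_one_div] at hd
  have h0 := DFunLike.congr_fun (IsLocalMin.hasFDerivAt_eq_zero
    (IsMinOn.isLocalMin (f := fun y => γ * f y + ‖x - y‖ ^ 2 / 2) (s := univ)
      (fun y _ => hmin y) univ_mem) hd) (x - p - γ • g)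
  simp only [add_apply, smul_apply, ContinuousLinearMap.comp_neg, ContinuousLinearMap.comp_id,
    neg_apply, InnerProductSpace.toDual_apply_apply, coe_innerSL_apply, zero_apply, smul_eq_mul,
    nsmul_eq_mul, Nat.cast_ofNat] at h0
  have hv : ⟪x - p - γ • g, x - p - γ • g⟫_ℝ = 0 := by
    rw [inner_sub_left (x - p), real_inner_smul_left]
    linarith
  rwa [inner_self_eq_zero, sub_eq_zero] at hv

theorem sq_norm_sub_le_inner_of_inner_le {x x' p p' : H} {c r r' : ℝ}
    (h : ⟪x - p, p' - p⟫_ℝ ≤ c * (r' - r)) (h' : ⟪x' - p', p - p'⟫_ℝ ≤ c * (r - r')) :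
    ‖p - p'‖ ^ 2 ≤ ⟪x - x', p - p'⟫_ℝ := by
  rw [← neg_sub p p', inner_neg_right] at h
  have hsum : ⟪x - p, p - p'⟫_ℝ - ⟪x' - p', p - p'⟫_ℝ ≥ 0 := by linarith
  rw [← inner_sub_left, show x - p - (x' - p') = (x - x') - (p - p') by abel, inner_sub_left,
    real_inner_self_eq_norm_sq] at hsum
  linarith

theorem lipschitzWith_one_of_sq_norm_sub_le_inner {P : H → H}
    (hP : ∀ a b, ‖P a - P b‖ ^ 2 ≤ ⟪a - b, P a - P b⟫_ℝ) : LipschitzWith 1 P := by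
  refine LipschitzWith.of_dist_le_mul fun a b => ?_
  rw [NNReal.coe_one, one_mul, dist_eq_norm, dist_eq_norm]
  have h := (hP a b).trans (real_inner_le_norm _ _)
  rw [sq, mul_comm ‖a - b‖] at h
  rcases (norm_nonneg (P a - P b)).eq_or_lt with h0 | h0
  · exact h0 ▸ norm_nonneg _
  · exact le_of_mul_le_mul_left h h0

theorem eq_of_add_smul_eq_add_smul {P : H → H} (hP : ∀ a b, 0 ≤ ⟪a - b, P a - P b⟫_ℝ) {c : ℝ}
    (hc : 0 ≤ c) {a b : H} (hab : a + c • P a = b + c • P b) : a = b := by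
  have hd : a - b = c • (P b - P a) := by
    rw [smul_sub, sub_eq_sub_iff_add_eq_add, hab, add_comm]
  have hsq : ‖a - b‖ ^ 2 ≤ 0 := by
    rw [← real_inner_self_eq_norm_sq]
    nth_rw 2 [hd]
    rw [real_inner_smul_right, ← neg_sub (P a), inner_neg_right]
    nlinarith [hP a b]
  rw [← sub_eq_zero, ← norm_eq_zero]
  exact (pow_eq_zero_iff two_ne_zero).mp (le_antisymm hsq (sq_nonneg _))

end Subgradient

section Prox
variable {H : Type*} [NormedAddCommGroup H]

-- `IsProxPoint φ μ x p` says `p = prox_{φ/μ} x`.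
def IsProxPoint (φ : H → EReal) (μ : ℝ) (x p : H) : Prop :=
  ∀ y : H, ((μ⁻¹ : ℝ) : EReal) * φ p + ((‖x - p‖ ^ 2 / 2 : ℝ) : EReal)
    ≤ ((μ⁻¹ : ℝ) : EReal) * φ y + ((‖x - y‖ ^ 2 / 2 : ℝ) : EReal)

variable {φ : H → EReal} {μ : ℝ} {x p : H}

theorem IsProxPoint.ne_top (hp : IsProxPoint φ μ x p) (hμ : 0 < μ) (hproper : ∃ y, φ y ≠ ⊤) :
    φ p ≠ ⊤ := by
  obtain ⟨y, hy⟩ := hproper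
  intro hp_top
  have h := hp y
  rw [hp_top, EReal.coe_mul_top_of_pos (inv_pos.mpr hμ), EReal.top_add_coe, top_le_iff] at h
  have hμ' : (0 : EReal) ≤ ((μ⁻¹ : ℝ) : EReal) := EReal.coe_nonneg.mpr (inv_pos.mpr hμ).le
  exact (EReal.add_lt_top ((EReal.mul_ne_top _ _).mpr ⟨Or.inl (EReal.coe_ne_bot _), Or.inl hμ',
    Or.inl (EReal.coe_ne_top _), Or.inr hy⟩) (EReal.coe_ne_top _)).ne h

theorem IsProxPoint.le_of_eq_coe (hp : IsProxPoint φ μ x p) {y : H} {a b : ℝ}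
    (ha : φ p = a) (hb : φ y = b) : μ⁻¹ * a + ‖x - p‖ ^ 2 / 2 ≤ μ⁻¹ * b + ‖x - y‖ ^ 2 / 2 := by
  have h := hp y
  rw [ha, hb] at h
  exact_mod_cast h

theorem IsProxPoint.iInf_add_eq (hp : IsProxPoint φ μ x p) (hμ : 0 < μ) (hnebot : ∀ y, φ y ≠ ⊥)
    {a : ℝ} (ha : φ p = a) :
    ⨅ y : H, ((μ * (‖y‖ ^ 2 / 2) : ℝ) : EReal) + φ (x - y)
      = ((μ * (‖x - p‖ ^ 2 / 2) + a : ℝ) : EReal) := by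
  refine le_antisymm ?_ (le_iInf fun y => ?_)
  · refine (iInf_le _ (x - p)).trans_eq ?_
    rw [sub_sub_cancel, ha, EReal.coe_add]
  · rcases eq_or_ne (φ (x - y)) ⊤ with hy | hy
    · rw [hy, EReal.coe_add_top]
      exact le_top
    · have hb := (EReal.coe_toReal hy (hnebot _)).symm
      have h := mul_le_mul_of_nonneg_left (hp.le_of_eq_coe ha hb) hμ.le
      rw [sub_sub_cancel, mul_add, mul_add, ← mul_assoc, ← mul_assoc, mul_inv_cancel₀ hμ.ne',
        one_mul, one_mul] at h
      rw [hb, ← EReal.coe_add, EReal.coe_le_coe_iff]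
      linarith

variable [InnerProductSpace ℝ H]

-- Convexity of an `EReal`-valued function, stated by hand: `ConvexOn` needs a module codomain.
def ConvexEReal (φ : H → EReal) : Prop :=
  ∀ x y : H, ∀ a b : ℝ, 0 ≤ a → 0 ≤ b → a + b = 1 →
    φ (a • x + b • y) ≤ (a : EReal) * φ x + (b : EReal) * φ y

theorem IsProxPoint.inner_le_of_eq_coe (hp : IsProxPoint φ μ x p) (hμ : 0 < μ) {y : H} {a b : ℝ}
    (ha : φ p = a) (hb : φ y = b) :
    μ * ⟪x, y⟫_ℝ - μ * (‖y‖ ^ 2 / 2) - b ≤ μ * ⟪x, p⟫_ℝ - μ * (‖p‖ ^ 2 / 2) - a := by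
  have h := mul_le_mul_of_nonneg_left (hp.le_of_eq_coe ha hb) hμ.le
  rw [mul_add, mul_add, ← mul_assoc, ← mul_assoc, mul_inv_cancel₀ hμ.ne', one_mul, one_mul,
    norm_sub_sq_real, norm_sub_sq_real] at h
  linarith

theorem exists_eq_coe_le_of_convex (hconv : ConvexEReal φ)
    (hnebot : ∀ x, φ x ≠ ⊥) {x y : H} {r s t : ℝ} (hx : φ x = r) (hy : φ y = s)
    (ht₀ : 0 ≤ t) (ht₁ : t ≤ 1) :
    ∃ u : ℝ, φ ((1 - t) • x + t • y) = u ∧ u ≤ (1 - t) * r + t * s := by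
  have h := hconv x y (1 - t) t (by linarith) ht₀ (by ring)
  rw [hx, hy, ← EReal.coe_mul, ← EReal.coe_mul, ← EReal.coe_add] at h
  have hne_top : φ ((1 - t) • x + t • y) ≠ ⊤ := ne_top_of_le_ne_top (EReal.coe_ne_top _) h
  refine ⟨_, (EReal.coe_toReal hne_top (hnebot _)).symm, ?_⟩
  rw [← EReal.coe_le_coe_iff, EReal.coe_toReal hne_top (hnebot _)]
  exact h

-- Comparing `p` with the points `p + t (y - p)` of the segment and letting `t → 0`.
theorem IsProxPoint.inner_le (hconv : ConvexEReal φ)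
    (hnebot : ∀ x, φ x ≠ ⊥) (hp : IsProxPoint φ μ x p) (hμ : 0 < μ) {y : H} {a b : ℝ}
    (ha : φ p = a) (hb : φ y = b) : ⟪x - p, y - p⟫_ℝ ≤ μ⁻¹ * (b - a) := by
  refine le_of_forall_pos_le_add_mul (C := ‖y - p‖ ^ 2 / 2) (by positivity) fun t ht ht₁ => ?_
  obtain ⟨u, hu, hua⟩ := exists_eq_coe_le_of_convex hconv hnebot ha hb ht.le ht₁
  have hseg : (1 - t) • p + t • y = p + t • (y - p) := by
    rw [sub_smul, one_smul, smul_sub]; abel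
  rw [hseg] at hu
  have hmin := hp.le_of_eq_coe ha hu
  have hexp : ‖x - (p + t • (y - p))‖ ^ 2
      = ‖x - p‖ ^ 2 - 2 * t * ⟪x - p, y - p⟫_ℝ + t ^ 2 * ‖y - p‖ ^ 2 := by
    rw [← sub_sub, norm_sub_sq_real, real_inner_smul_right, norm_smul, Real.norm_eq_abs, mul_pow,
      sq_abs]
    ring
  have hμu := mul_le_mul_of_nonneg_left hua (inv_pos.mpr hμ).le
  have key : t * ⟪x - p, y - p⟫_ℝ ≤ t * (μ⁻¹ * (b - a) + t * (‖y - p‖ ^ 2 / 2)) := by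
    nlinarith
  exact le_of_mul_le_mul_left key ht

theorem IsProxPoint.sq_norm_sub_le_inner (hconv : ConvexEReal φ)
    (hnebot : ∀ x, φ x ≠ ⊥) (hproper : ∃ x, φ x ≠ ⊤) (hμ : 0 < μ) {x' p' : H}
    (hp : IsProxPoint φ μ x p) (hp' : IsProxPoint φ μ x' p') :
    ‖p - p'‖ ^ 2 ≤ ⟪x - x', p - p'⟫_ℝ :=
  have ha := (EReal.coe_toReal (hp.ne_top hμ hproper) (hnebot p)).symm
  have ha' := (EReal.coe_toReal (hp'.ne_top hμ hproper) (hnebot p')).symm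
  sq_norm_sub_le_inner_of_inner_le (hp.inner_le hconv hnebot hμ ha ha')
    (hp'.inner_le hconv hnebot hμ ha' ha)

-- Multiplied by `s`, the variational inequality characterizing `w = prox_{φ/(μ s)} u` becomes
-- the one characterizing `prox_{φ/μ} z`.
theorem IsProxPoint.eq_of_sub_eq_smul_sub (hconv : ConvexEReal φ)
    (hnebot : ∀ x, φ x ≠ ⊥) (hproper : ∃ x, φ x ≠ ⊤) (hμ : 0 < μ) {s : ℝ} (hs : 0 < s)
    {z u w : H} (hp : IsProxPoint φ μ z p) (hw : IsProxPoint φ (μ * s) u w)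
    (hzu : z - w = s • (u - w)) : p = w := by
  have ha := (EReal.coe_toReal (hp.ne_top hμ hproper) (hnebot p)).symm
  have hb := (EReal.coe_toReal (hw.ne_top (mul_pos hμ hs) hproper) (hnebot w)).symm
  have hwz : ⟪z - w, p - w⟫_ℝ ≤ μ⁻¹ * ((φ p).toReal - (φ w).toReal) := by
    have h := mul_le_mul_of_nonneg_left (hw.inner_le hconv hnebot (mul_pos hμ hs) hb ha) hs.le
    rwa [← mul_assoc, mul_inv, mul_comm μ⁻¹, ← mul_assoc, mul_inv_cancel₀ hs.ne', one_mul,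
      ← real_inner_smul_left, ← hzu] at h
  have h := sq_norm_sub_le_inner_of_inner_le (hp.inner_le hconv hnebot hμ ha hb) hwz
  rw [sub_self, inner_zero_left] at h
  rw [← sub_eq_zero, ← norm_eq_zero]
  exact (pow_eq_zero_iff two_ne_zero).mp (le_antisymm h (sq_nonneg _))

theorem add_inner_le_of_isProxPoint (hμ : 0 < μ) (hnebot : ∀ x, φ x ≠ ⊥)
    (hproper : ∃ x, φ x ≠ ⊤) {h : H → ℝ} {P : H → H} (hP : ∀ x, IsProxPoint φ μ x (P x))
    (hdef : ∀ x, ((h x : ℝ) : EReal) =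
      ((μ * (‖x‖ ^ 2 / 2) : ℝ) : EReal) - ⨅ y : H, ((μ * (‖y‖ ^ 2 / 2) : ℝ) : EReal) + φ (x - y))
    (x z : H) : h x + ⟪μ • P x, z - x⟫_ℝ ≤ h z := by
  have hcoe (x : H) : φ (P x) = (φ (P x)).toReal :=
    (EReal.coe_toReal ((hP x).ne_top hμ hproper) (hnebot _)).symm
  have hval (x : H) : h x = μ * ⟪x, P x⟫_ℝ - μ * (‖P x‖ ^ 2 / 2) - (φ (P x)).toReal := by
    have e := hdef x
    rw [(hP x).iInf_add_eq hμ hnebot (hcoe x), ← EReal.coe_sub, EReal.coe_eq_coe_iff] at e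
    rw [e, norm_sub_sq_real]
    ring
  rw [hval, hval, real_inner_smul_left, inner_sub_right, real_inner_comm x, real_inner_comm z]
  linarith [(hP z).inner_le_of_eq_coe hμ (hcoe z) (hcoe x)]

end Prox

theorem stmt_19_general {H : Type*} [NormedAddCommGroup H] [InnerProductSpace ℝ H] [CompleteSpace H]
    (φ : H → EReal)
    (hproper : ∃ x, φ x ≠ ⊤) (hnebot : ∀ x, φ x ≠ ⊥)
    (hconv : ∀ x y : H, ∀ a b : ℝ, 0 ≤ a → 0 ≤ b → a + b = 1 →
      φ (a • x + b • y) ≤ (a : EReal) * φ x + (b : EReal) * φ y)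
    (β : ℝ) (hβ : 0 < β)
    -- `h = β q − (β q) □ φ`, with `h` real valued :
    (h : H → ℝ)
    (hdef : ∀ x : H, ((h x : ℝ) : EReal) =
      ((β * (‖x‖ ^ 2 / 2) : ℝ) : EReal) -
        ⨅ y : H, (((β * (‖y‖ ^ 2 / 2) : ℝ)) : EReal) + φ (x - y))
    -- `P1 x = prox_{φ/β} x` :
    (P1 : H → H)
    (hP1 : ∀ x y : H,
      ((β⁻¹ : ℝ) : EReal) * φ (P1 x) + ((‖x - P1 x‖ ^ 2 / 2 : ℝ) : EReal)
        ≤ ((β⁻¹ : ℝ) : EReal) * φ y + ((‖x - y‖ ^ 2 / 2 : ℝ) : EReal))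
    (γ : ℝ) (hγ : 0 < γ)
    -- `P2 x = prox_{φ/(β(1+βγ))} x` :
    (P2 : H → H)
    (hP2 : ∀ x y : H,
      (((β * (1 + β * γ))⁻¹ : ℝ) : EReal) * φ (P2 x) + ((‖x - P2 x‖ ^ 2 / 2 : ℝ) : EReal)
        ≤ (((β * (1 + β * γ))⁻¹ : ℝ) : EReal) * φ y + ((‖x - y‖ ^ 2 / 2 : ℝ) : EReal)) :
    ConvexOn ℝ Set.univ h ∧
    (∀ x : H, HasGradientAt h (β • P1 x) x) ∧
    LipschitzWith (Real.toNNReal β) (fun x => β • P1 x) ∧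
    (∀ x p : H,
      -- `p = prox_{γh} x` :
      (∀ y : H, γ * h p + ‖x - p‖ ^ 2 / 2 ≤ γ * h y + ‖x - y‖ ^ 2 / 2) →
      p = x - (β * γ) • P2 ((1 / (1 + β * γ)) • x)) := by
  have hP1' (x : H) : IsProxPoint φ β x (P1 x) := hP1 x
  have hsub := add_inner_le_of_isProxPoint hβ hnebot hproper hP1' hdef
  have hfirm (a b : H) : ‖P1 a - P1 b‖ ^ 2 ≤ ⟪a - b, P1 a - P1 b⟫_ℝ :=
    (hP1' a).sq_norm_sub_le_inner hconv hnebot hproper hβ (hP1' b)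
  have hlip : LipschitzWith (Real.toNNReal β) (fun x => β • P1 x) := by
    have := (lipschitzWith_smul β).comp (lipschitzWith_one_of_sq_norm_sub_le_inner hfirm)
    rwa [mul_one, Real.nnnorm_of_nonneg hβ.le, ← Real.toNNReal_of_nonneg hβ.le] at this
  have hgrad (x : H) : HasGradientAt h (β • P1 x) x := hasGradientAt_of_le_add_inner hsub hlip x
  refine ⟨convexOn_univ_of_le_add_inner _ hsub, hgrad, hlip, fun x p hmin => ?_⟩
  have hp : p + (γ * β) • P1 p = x := by
    rw [mul_smul, ← sub_eq_smul_of_forall_le_add_sq (hgrad p) hmin, add_sub_cancel]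
  set w := P2 ((1 / (1 + β * γ)) • x)
  have hw : P1 (x - (β * γ) • w) = w := by
    refine (hP1' _).eq_of_sub_eq_smul_sub hconv hnebot hproper hβ (by positivity) (hP2 _) ?_
    have hs : (1 + β * γ) ≠ 0 := by positivity
    rw [smul_sub, smul_smul, mul_one_div_cancel hs, one_smul, add_smul, one_smul]
    abel
  refine eq_of_add_smul_eq_add_smul (fun a b => (sq_nonneg _).trans (hfirm a b))
    (by positivity : 0 ≤ γ * β) ?_
  rw [hp, hw, mul_comm, sub_add_cancel]

/-- Let `H` be a real Hilbert space, `φ : H → (−∞, +∞]` proper lower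
semicontinuous convex, `β > 0`, and `h = β q − (β q) □ φ` where `q = ‖·‖²/2` and `□` is
infimal convolution.  Then `h : H → ℝ` is convex and Fréchet differentiable with a
`β`-Lipschitzian gradient; `∇h(x) = β • prox_{φ/β} x`; and for every `γ > 0`,
`prox_{γh} x = x − βγ • prox_{φ/(β(1+βγ))}(x/(1+βγ))`.  Extended-real values are modeled
in `EReal`, and proximal points are characterized as minimizers of the corresponding
Moreau problems. -/
theorem stmt_19 {H : Type*} [NormedAddCommGroup H] [InnerProductSpace ℝ H] [CompleteSpace H]
    (φ : H → EReal)
    (hproper : ∃ x, φ x ≠ ⊤) (hnebot : ∀ x, φ x ≠ ⊥)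
    (hlsc : LowerSemicontinuous φ)
    (hconv : ∀ x y : H, ∀ a b : ℝ, 0 ≤ a → 0 ≤ b → a + b = 1 →
      φ (a • x + b • y) ≤ (a : EReal) * φ x + (b : EReal) * φ y)
    (β : ℝ) (hβ : 0 < β)
    -- `h = β q − (β q) □ φ`, with `h` real valued :
    (h : H → ℝ)
    (hdef : ∀ x : H, ((h x : ℝ) : EReal) =
      ((β * (‖x‖ ^ 2 / 2) : ℝ) : EReal) -
        ⨅ y : H, (((β * (‖y‖ ^ 2 / 2) : ℝ)) : EReal) + φ (x - y))
    -- `P1 x = prox_{φ/β} x` :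
    (P1 : H → H)
    (hP1 : ∀ x y : H,
      ((β⁻¹ : ℝ) : EReal) * φ (P1 x) + ((‖x - P1 x‖ ^ 2 / 2 : ℝ) : EReal)
        ≤ ((β⁻¹ : ℝ) : EReal) * φ y + ((‖x - y‖ ^ 2 / 2 : ℝ) : EReal))
    (γ : ℝ) (hγ : 0 < γ)
    -- `P2 x = prox_{φ/(β(1+βγ))} x` :
    (P2 : H → H)
    (hP2 : ∀ x y : H,
      (((β * (1 + β * γ))⁻¹ : ℝ) : EReal) * φ (P2 x) + ((‖x - P2 x‖ ^ 2 / 2 : ℝ) : EReal)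
        ≤ (((β * (1 + β * γ))⁻¹ : ℝ) : EReal) * φ y + ((‖x - y‖ ^ 2 / 2 : ℝ) : EReal)) :
    ConvexOn ℝ Set.univ h ∧
    (∀ x : H, HasGradientAt h (β • P1 x) x) ∧
    LipschitzWith (Real.toNNReal β) (fun x => β • P1 x) ∧
    (∀ x p : H,
      -- `p = prox_{γh} x` :
      (∀ y : H, γ * h p + ‖x - p‖ ^ 2 / 2 ≤ γ * h y + ‖x - y‖ ^ 2 / 2) →
      p = x - (β * γ) • P2 ((1 / (1 + β * γ)) • x)) :=
  stmt_19_general φ hproper hnebot hconv β hβ h hdef P1 hP1 γ hγ P2 hP2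
end
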